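/- arXiv:1803.02319 — 8 statements merged into one kernel-verified Lean document; each statement's English description precedes it below -/
import Mathlib

section
/- Let T be a finite indecomposable partially ordered set and let P be a subset of T that is indecomposable (with the induced order) with 4 ≤ |P| ≤ |T| − 2. Then there is an indecomposable subset U of T with P ⊂ U ⊆ T and |U| = |P| + 2. -/
/-- `A` is an order-autonomous subset of `S` (with the induced order on `S`):
every element of `S \ A` relates to all elements of `A` in the same way. -/
def IsOrderAutonomousIn {α : Type*} [PartialOrder α] (S A : Set α) : Prop :=
  A ⊆ S ∧ ∀ t ∈ S \ A, ∀ a₁ ∈ A, ∀ a₂ ∈ A, (t < a₁ ↔ t < a₂) ∧ (a₁ < t ↔ a₂ < t)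

/-- `S` is indecomposable (as a poset with the induced order): it has no
order-autonomous subset `A` with `2 ≤ |A|` and `A ≠ S`. -/
def IsIndecomposableSubset {α : Type*} [PartialOrder α] (S : Set α) : Prop :=
  ∀ A : Set α, IsOrderAutonomousIn S A → A.Subsingleton ∨ A = S

/-- The poset `α` is indecomposable. -/
def IsIndecomposablePoset (α : Type*) [PartialOrder α] : Prop :=
  IsIndecomposableSubset (Set.univ : Set α)

/-- `S = L ⊕ U`: nonempty `L`, `U` with everything in `L` strictly below everything in `U`. -/
def IsSeriesDecomposable {α : Type*} [PartialOrder α] (S : Set α) : Prop :=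
  ∃ L U : Set α, L.Nonempty ∧ U.Nonempty ∧ L ∪ U = S ∧ Disjoint L U ∧
    ∀ l ∈ L, ∀ u ∈ U, l < u

/-- `F` is a fence from `x` to `y`: an enumeration `f₁, …, fₙ` with `f₁ = x`, `fₙ = y`,
whose only strict comparabilities are between consecutive elements, alternating in
direction. -/
def IsFenceFrom {α : Type*} [PartialOrder α] (F : Set α) (x y : α) : Prop :=
  ∃ n : ℕ, ∃ f : Fin (n + 1) → α, Function.Injective f ∧ Set.range f = F ∧
    f 0 = x ∧ f (Fin.last n) = y ∧
    (∀ i j : Fin (n + 1), i.val + 1 < j.val → ¬ f i ≤ f j ∧ ¬ f j ≤ f i) ∧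
    ((∀ i : Fin n, if i.val % 2 = 0 then f i.castSucc < f i.succ
        else f i.succ < f i.castSucc) ∨
     (∀ i : Fin n, if i.val % 2 = 0 then f i.succ < f i.castSucc
        else f i.castSucc < f i.succ))

/-- The class `𝒳` of triples `(P, a, b)` of Definition "classX". -/
inductive InX {α : Type*} [PartialOrder α] : Set α → α → α → Prop
  /-- `P` is an `N`, i.e. `u < b > a < v` with no other comparabilities. -/
  | base {u a b v : α} (hub : u < b) (hab : a < b) (hav : a < v)
      (hua : ¬ u ≤ a ∧ ¬ a ≤ u) (huv : ¬ u ≤ v ∧ ¬ v ≤ u) (hbv : ¬ b ≤ v ∧ ¬ v ≤ b) :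
      InX {u, a, b, v} a b
  /-- attach a new minimal element `a` below `P \ {ã}`, incomparable to `ã`. -/
  | addMin {P : Set α} {a' b a : α} (h : InX P a' b) (ha : a ∉ P)
      (hlt : ∀ p ∈ P \ {a'}, a < p) (hinc : ¬ a ≤ a' ∧ ¬ a' ≤ a) :
      InX (insert a P) a b
  /-- attach a new maximal element `b` above `P \ {b̃}`, incomparable to `b̃`. -/
  | addMax {P : Set α} {a b' b : α} (h : InX P a b') (hb : b ∉ P)
      (hgt : ∀ p ∈ P \ {b'}, p < b) (hinc : ¬ b ≤ b' ∧ ¬ b' ≤ b) :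
      InX (insert b P) a b

/-- The comparability graph of a poset. -/
def compGraph (α : Type*) [PartialOrder α] : SimpleGraph α where
  Adj x y := x ≠ y ∧ (x ≤ y ∨ y ≤ x)
  symm := ⟨fun x y hxy => ⟨hxy.1.symm, hxy.2.symm⟩⟩
  loopless := ⟨fun x hx => hx.1 rfl⟩

/-- The poset `β` is an indecomposable V-cover with minimal elements `l` and `d`,
distinguished elements `a` and `b`, fence `F` from `b` to `h` with `h` maximal in `F`:
the strict upper bounds of `l` are exactly `{a} ∪ F` with `a` incomparable to all of `F`
(so the comparability components of that set are `{a}` and `F`), and the strict upper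
bounds of `d` are exactly `{h}`. -/
def IsIndecVCover {β : Type*} [PartialOrder β] (l d a b h : β) (F : Set β) : Prop :=
  l ≠ d ∧ IsMin l ∧ IsMin d ∧ (∀ x : β, IsMin x → x = l ∨ x = d) ∧
  {x : β | l < x} = insert a F ∧ a ∉ F ∧
  (∀ f ∈ F, ¬ a ≤ f ∧ ¬ f ≤ a) ∧
  IsFenceFrom F b h ∧ (∀ f ∈ F, ¬ h < f) ∧
  {x : β | d < x} = {h}

/-!
Suppose no two-point extension of `P` is indecomposable. Each `t ∉ P` is of one of three kinds:
`P ∪ {t}` is indecomposable, `t` relates alike to all of `P`, or `t` is a twin over `P` of some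
`x ∈ P`, which is unique because `|P| ≥ 3`. A nontrivial autonomous subset of `P ∪ {t, w}` then
pins down how `t` relates to `w`: as to `x` if `w` is a twin of `x` and `t` is not; as to all of
`P` if `w` is of the first kind and `t` of the second; and `t ∈ P` relates alike to `w` and `w'`
if both are of the first kind. Hence one of the following is a nontrivial autonomous subset of
`T`: `x` with its twins, if some `x` has one; otherwise the elements of the first kind, if they
exhaust `T \ P`; otherwise `P` together with them.
-/

open Set

section

variable {α : Type*} {S W M P : Set α} {t u v w x y : α}

theorem Set.Nontrivial.mem_of_subset_insert (hM : M.Nontrivial) (hMW : M ⊆ insert v W)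
    (hMW' : (M ∩ W).Subsingleton) : v ∈ M := by
  by_contra hv
  rw [inter_eq_left.2 ((subset_insert_iff_of_notMem hv).1 hMW)] at hMW'
  exact hM.not_subsingleton hMW'

theorem Set.nontrivial_of_three_le_encard (h3 : 3 ≤ P.encard) : P.Nontrivial :=
  one_lt_encard_iff_nontrivial.1 (lt_of_lt_of_le (by norm_num) h3)

theorem Set.nontrivial_diff_singleton_of_three_le_encard (h3 : 3 ≤ P.encard) (hx : x ∈ P) :
    (P \ {x}).Nontrivial := by
  rw [← one_lt_encard_iff_nontrivial]
  by_contra! hle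
  have : P.encard ≤ 2 := by
    calc P.encard = (P \ {x}).encard + 1 := (encard_sdiff_singleton_add_one hx).symm
      _ ≤ 1 + 1 := by gcongr
      _ = 2 := by norm_num
  exact absurd (h3.trans this) (by norm_num)

variable [PartialOrder α]

def RelatesAlike (t a b : α) : Prop := (t < a ↔ t < b) ∧ (a < t ↔ b < t)

namespace RelatesAlike

theorem refl (t a : α) : RelatesAlike t a a := ⟨Iff.rfl, Iff.rfl⟩

theorem symm {a b : α} (h : RelatesAlike t a b) : RelatesAlike t b a := ⟨h.1.symm, h.2.symm⟩

theorem trans {a b c : α} (h : RelatesAlike t a b) (h' : RelatesAlike t b c) :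
    RelatesAlike t a c :=
  ⟨h.1.trans h'.1, h.2.trans h'.2⟩

end RelatesAlike

namespace IsOrderAutonomousIn

theorem relatesAlike (hM : IsOrderAutonomousIn S M) (ht : t ∈ S) (htM : t ∉ M) {a b : α}
    (ha : a ∈ M) (hb : b ∈ M) : RelatesAlike t a b :=
  hM.2 t ⟨ht, htM⟩ a ha b hb

theorem of_relatesAlike (hMS : M ⊆ S) (c : α)
    (h : ∀ t ∈ S, t ∉ M → ∀ a ∈ M, RelatesAlike t a c) : IsOrderAutonomousIn S M :=
  ⟨hMS, fun t ⟨ht, htM⟩ a ha b hb => (h t ht htM a ha).trans (h t ht htM b hb).symm⟩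

theorem inter (hM : IsOrderAutonomousIn S M) (hWS : W ⊆ S) : IsOrderAutonomousIn W (M ∩ W) :=
  ⟨inter_subset_right, fun _ ⟨htW, htM⟩ _ ha _ hb =>
    hM.relatesAlike (hWS htW) (fun h => htM ⟨h, htW⟩) ha.1 hb.1⟩

end IsOrderAutonomousIn

theorem not_isIndecomposableSubset_iff :
    ¬ IsIndecomposableSubset S ↔
      ∃ M, IsOrderAutonomousIn S M ∧ M.Nontrivial ∧ M ≠ S := by
  simp only [IsIndecomposableSubset, not_forall, not_or, ← not_subsingleton_iff, exists_prop]

theorem IsOrderAutonomousIn.not_isIndecomposableSubset (hM : IsOrderAutonomousIn S M)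
    (hnt : M.Nontrivial) (hne : M ≠ S) : ¬ IsIndecomposableSubset S :=
  not_isIndecomposableSubset_iff.2 ⟨M, hM, hnt, hne⟩

theorem IsIndecomposableSubset.subset_or_subsingleton (hP : IsIndecomposableSubset P)
    (hM : IsOrderAutonomousIn S M) (hPS : P ⊆ S) : P ⊆ M ∨ (M ∩ P).Subsingleton :=
  (hP _ (hM.inter hPS)).symm.imp inter_eq_right.1 id

def IsUniformOver (P : Set α) (u : α) : Prop := ∀ a ∈ P, ∀ b ∈ P, RelatesAlike u a b

def IsTwinOver (P : Set α) (x w : α) : Prop := ∀ t ∈ P, t ≠ x → RelatesAlike t x w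

theorem IsOrderAutonomousIn.isUniformOver (hM : IsOrderAutonomousIn S M) (hu : u ∈ S)
    (huM : u ∉ M) (hPM : P ⊆ M) : IsUniformOver P u :=
  fun _ ha _ hb => hM.relatesAlike hu huM (hPM ha) (hPM hb)

theorem IsOrderAutonomousIn.isTwinOver (hM : IsOrderAutonomousIn S M) (hPS : P ⊆ S)
    (hMP : (M ∩ P).Subsingleton) (hx : x ∈ M ∩ P) (hw : w ∈ M) : IsTwinOver P x w :=
  fun _ ht htx => hM.relatesAlike (hPS ht) (fun htM => htx (hMP ⟨htM, ht⟩ hx)) hx.1 hw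

namespace IsUniformOver

theorem of_relatesAlike (hw : IsUniformOver P w) (h : ∀ s ∈ P, RelatesAlike s u w) :
    IsUniformOver P u := fun a ha b hb =>
  ⟨(h a ha).2.trans ((hw a ha b hb).1.trans (h b hb).2.symm),
    (h a ha).1.trans ((hw a ha b hb).2.trans (h b hb).1.symm)⟩

theorem not_isIndecomposableSubset_insert (hP : P.Nontrivial) (hu : u ∉ P)
    (h : IsUniformOver P u) : ¬ IsIndecomposableSubset (insert u P) := by
  refine IsOrderAutonomousIn.not_isIndecomposableSubset ⟨subset_insert u P, ?_⟩ hP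
    fun hPu => hu (hPu ▸ mem_insert u P)
  rintro t ⟨ht, htP⟩ a ha b hb
  obtain rfl := (mem_insert_iff.1 ht).resolve_right htP
  exact h a ha b hb

end IsUniformOver

namespace IsTwinOver

theorem of_isOrderAutonomousIn (hw : IsTwinOver P x w) (hM : IsOrderAutonomousIn S M)
    (hPS : P ⊆ S) (hMP : M ∩ P ⊆ {x}) (hwM : w ∈ M) (huM : u ∈ M) : IsTwinOver P x u :=
  fun s hs hsx => (hw s hs hsx).trans
    (hM.relatesAlike (hPS hs) (fun hsM => hsx (hMP ⟨hsM, hs⟩)) hwM huM)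

theorem not_isIndecomposableSubset_insert (hP : P.Nontrivial) (hx : x ∈ P) (hw : w ∉ P)
    (h : IsTwinOver P x w) : ¬ IsIndecomposableSubset (insert w P) := by
  have hxw : x ≠ w := ne_of_mem_of_not_mem hx hw
  refine IsOrderAutonomousIn.not_isIndecomposableSubset
    (.of_relatesAlike (insert_subset (mem_insert_of_mem w hx) (by simp)) x ?_)
    (nontrivial_pair hxw) ?_
  · rintro t ht htxw a (rfl | rfl)
    · exact .refl t a
    · simp only [mem_insert_iff, mem_singleton_iff, not_or] at htxw
      exact (h t ((mem_insert_iff.1 ht).resolve_left htxw.2) htxw.1).symm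
  · intro hPw
    obtain ⟨y, hy, hyx⟩ := hP.exists_ne x
    have : y ∈ ({x, w} : Set α) := hPw ▸ mem_insert_of_mem w hy
    rcases this with rfl | rfl
    exacts [hyx rfl, hw hy]

theorem not_isUniformOver (hP : IsIndecomposableSubset P) (h3 : 3 ≤ P.encard) (hx : x ∈ P)
    (h : IsTwinOver P x w) : ¬ IsUniformOver P w := by
  intro hU
  refine IsOrderAutonomousIn.not_isIndecomposableSubset ⟨sdiff_subset, ?_⟩
    (nontrivial_diff_singleton_of_three_le_encard h3 hx) (fun hPx => (hPx ▸ hx).2 rfl) hP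
  rintro t ⟨htP, htx⟩ a ⟨haP, hax⟩ b ⟨hbP, hbx⟩
  obtain rfl : t = x := by simpa [htP] using htx
  exact ⟨(h a haP hax).2.trans ((hU a haP b hbP).1.trans (h b hbP hbx).2.symm),
    (h a haP hax).1.trans ((hU a haP b hbP).2.trans (h b hbP hbx).1.symm)⟩

theorem unique (hP : IsIndecomposableSubset P) (h3 : 3 ≤ P.encard) (hx : x ∈ P) (hy : y ∈ P)
    (hxw : IsTwinOver P x w) (hyw : IsTwinOver P y w) : x = y := by
  by_contra hxy
  refine IsOrderAutonomousIn.not_isIndecomposableSubset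
    (.of_relatesAlike (insert_subset hx (singleton_subset_iff.2 hy)) x ?_)
    (nontrivial_pair hxy) ?_ hP
  · rintro t ht htxy a (rfl | rfl)
    · exact .refl t a
    · exact ((hxw t ht fun h => htxy (h ▸ mem_insert t _)).trans
        (hyw t ht fun h => htxy (h ▸ mem_insert_of_mem x rfl)).symm).symm
  · intro hPxy
    obtain ⟨z, ⟨hz, hzx⟩, hzy⟩ :=
      (nontrivial_diff_singleton_of_three_le_encard h3 hx).exists_ne y
    have : z ∈ ({x, y} : Set α) := hPxy ▸ hz
    rcases this with rfl | rfl
    exacts [hzx rfl, hzy rfl]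

theorem relatesAlike_of_isTwinOver (hx : x ∈ P) (hy : y ∈ P) (hxy : x ≠ y)
    (hxw : IsTwinOver P x w) (hyt : IsTwinOver P y t) (h : RelatesAlike w t y) :
    RelatesAlike t w x :=
  ⟨h.2.trans ((hxw y hy hxy.symm).1.symm.trans (hyt x hx hxy).2),
    h.1.trans ((hxw y hy hxy.symm).2.symm.trans (hyt x hx hxy).1)⟩

end IsTwinOver

theorem IsIndecomposableSubset.isUniformOver_or_isTwinOver (hP : IsIndecomposableSubset P)
    (hnd : ¬ IsIndecomposableSubset (insert u P)) :
    IsUniformOver P u ∨ ∃ x ∈ P, IsTwinOver P x u := by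
  obtain ⟨M, hM, hMnt, hMne⟩ := not_isIndecomposableSubset_iff.1 hnd
  rcases hP.subset_or_subsingleton hM (subset_insert u P) with hPM | hMP
  · refine .inl (hM.isUniformOver (mem_insert u P) (fun huM => hMne ?_) hPM)
    exact hM.1.antisymm (insert_subset huM hPM)
  · have huM : u ∈ M := hMnt.mem_of_subset_insert hM.1 hMP
    obtain ⟨x, hxM, hxu⟩ := hMnt.exists_ne u
    have hxP : x ∈ P := (mem_insert_iff.1 (hM.1 hxM)).resolve_left hxu
    exact .inr ⟨x, hxP, hM.isTwinOver (subset_insert u P) hMP ⟨hxM, hxP⟩ huM⟩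

theorem relatesAlike_of_isIndecomposableSubset_insert (hP : P.Nontrivial) (hu : u ∉ P)
    (hEu : IsIndecomposableSubset (insert u P)) (hEw : IsIndecomposableSubset (insert w P))
    (hZ : ¬ IsIndecomposableSubset (insert u (insert w P))) (ht : t ∈ P) :
    RelatesAlike t u w := by
  obtain ⟨M, hM, hMnt, hMne⟩ := not_isIndecomposableSubset_iff.1 hZ
  have hMZ : M ⊆ insert w (insert u P) := insert_comm u w P ▸ hM.1
  have hZu : insert u P ⊆ insert u (insert w P) := insert_subset_insert (subset_insert w P)
  rcases hEu.subset_or_subsingleton hM hZu with huM | huM <;>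
    rcases hEw.subset_or_subsingleton hM (subset_insert u _) with hwM | hwM
  · exact absurd (hM.1.antisymm (insert_subset (huM (mem_insert u P)) hwM)) hMne
  · refine (hP.mono (t := M ∩ insert w P) fun p hp => ?_).not_subsingleton hwM |>.elim
    exact ⟨huM (mem_insert_of_mem u hp), mem_insert_of_mem w hp⟩
  · refine (hP.mono (t := M ∩ insert u P) fun p hp => ?_).not_subsingleton huM |>.elim
    exact ⟨hwM (mem_insert_of_mem w hp), mem_insert_of_mem u hp⟩
  · have huM' : u ∈ M := hMnt.mem_of_subset_insert hM.1 hwM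
    have hwM' : w ∈ M := hMnt.mem_of_subset_insert hMZ huM
    have htM : t ∉ M := fun htM => ne_of_mem_of_not_mem ht hu
      (huM ⟨htM, mem_insert_of_mem u ht⟩ ⟨huM', mem_insert u P⟩)
    exact hM.relatesAlike (mem_insert_of_mem u (mem_insert_of_mem w ht)) htM huM' hwM'

theorem IsUniformOver.insert_of_isIndecomposableSubset_insert (hP : IsIndecomposableSubset P)
    (h3 : 3 ≤ P.encard) (hu : u ∉ P) (hw : IsUniformOver P w)
    (hEu : IsIndecomposableSubset (insert u P))
    (hZ : ¬ IsIndecomposableSubset (insert u (insert w P))) : IsUniformOver (insert u P) w := by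
  obtain ⟨M, hM, hMnt, hMne⟩ := not_isIndecomposableSubset_iff.1 hZ
  have hMZ : M ⊆ insert w (insert u P) := insert_comm u w P ▸ hM.1
  have hPZ : P ⊆ insert u (insert w P) := (subset_insert w P).trans (subset_insert u _)
  rcases hEu.subset_or_subsingleton hM (insert_subset_insert (subset_insert w P)) with huM | huM
  · refine hM.isUniformOver (mem_insert_of_mem u (mem_insert w P)) (fun hwM => hMne ?_) huM
    exact hM.1.antisymm (insert_subset (huM (mem_insert u P))
      (insert_subset hwM ((subset_insert u P).trans huM)))
  have hwM : w ∈ M := hMnt.mem_of_subset_insert hMZ huM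
  obtain ⟨m, hmM, hmw⟩ := hMnt.exists_ne w
  rcases mem_insert_iff.1 ((mem_insert_iff.1 (hMZ hmM)).resolve_left hmw) with rfl | hmP
  · refine absurd hEu (IsUniformOver.not_isIndecomposableSubset_insert
      (nontrivial_of_three_le_encard h3) hu (hw.of_relatesAlike fun s hs => ?_))
    have hsM : s ∉ M := fun hsM => ne_of_mem_of_not_mem hs hu
      (huM ⟨hsM, mem_insert_of_mem _ hs⟩ ⟨hmM, mem_insert _ P⟩)
    exact hM.relatesAlike (hPZ hs) hsM hmM hwM
  · have hMP : (M ∩ P).Subsingleton := huM.anti (inter_subset_inter_right M (subset_insert u P))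
    exact absurd hw (IsTwinOver.not_isUniformOver hP h3 hmP
      (hM.isTwinOver hPZ hMP ⟨hmM, hmP⟩ hwM))

theorem IsTwinOver.relatesAlike_of_not_isTwinOver (hP : IsIndecomposableSubset P)
    (h3 : 3 ≤ P.encard) (hx : x ∈ P) (hxw : IsTwinOver P x w) (hxt : ¬ IsTwinOver P x t)
    (hZ : ¬ IsIndecomposableSubset (insert t (insert w P))) : RelatesAlike t w x := by
  obtain ⟨M, hM, hMnt, hMne⟩ := not_isIndecomposableSubset_iff.1 hZ
  have hPZ : P ⊆ insert t (insert w P) := (subset_insert w P).trans (subset_insert t _)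
  have htZ : t ∈ insert t (insert w P) := mem_insert t _
  have hwZ : w ∈ insert t (insert w P) := mem_insert_of_mem t (mem_insert w P)
  rcases hP.subset_or_subsingleton hM hPZ with hPM | hMP
  · have hwM : w ∈ M := by
      by_contra hwM
      exact hxw.not_isUniformOver hP h3 hx (hM.isUniformOver hwZ hwM hPM)
    have htM : t ∉ M := fun htM =>
      hMne (hM.1.antisymm (insert_subset htM (insert_subset hwM hPM)))
    exact hM.relatesAlike htZ htM hwM (hPM hx)
  by_cases hwM : w ∈ M
  · have hMx : M ∩ P ⊆ {x} := fun y hy =>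
      (hxw.unique hP h3 hx hy.2 (hM.isTwinOver hPZ hMP hy hwM)).symm
    have htM : t ∉ M := fun htM => hxt (hxw.of_isOrderAutonomousIn hM hPZ hMx hwM htM)
    obtain ⟨y, hyM, hyw⟩ := hMnt.exists_ne w
    have hyP : y ∈ P := ((mem_insert_iff.1 (hM.1 hyM)).resolve_left
      (ne_of_mem_of_not_mem hyM htM)).resolve_left hyw
    obtain rfl : y = x := hMx ⟨hyM, hyP⟩
    exact hM.relatesAlike htZ htM hwM hyM
  · have hMtP : M ⊆ insert t P :=
      (subset_insert_iff_of_notMem hwM).1 (insert_comm t w P ▸ hM.1)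
    have htM : t ∈ M := hMnt.mem_of_subset_insert hMtP hMP
    obtain ⟨y, hyM, hyt⟩ := hMnt.exists_ne t
    have hyP : y ∈ P := (mem_insert_iff.1 (hMtP hyM)).resolve_left hyt
    have hyt' : IsTwinOver P y t := hM.isTwinOver hPZ hMP ⟨hyM, hyP⟩ htM
    have hxy : x ≠ y := by
      rintro rfl
      exact hxt hyt'
    exact hxw.relatesAlike_of_isTwinOver hx hyP hxy hyt' (hM.relatesAlike hwZ hwM htM hyM)

theorem not_isIndecomposablePoset_of_isTwinOver (hP : IsIndecomposableSubset P)
    (h3 : 3 ≤ P.encard)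
    (hZ : ∀ u ∉ P, ∀ w ∉ P, u ≠ w → ¬ IsIndecomposableSubset (insert u (insert w P)))
    (hx : x ∈ P) (hw : w ∉ P) (hxw : IsTwinOver P x w) : ¬ IsIndecomposablePoset α := by
  set Q := insert x {v | v ∉ P ∧ IsTwinOver P x v}
  have hQ : IsOrderAutonomousIn univ Q := by
    refine .of_relatesAlike (subset_univ Q) x fun t _ htQ a ha => ?_
    obtain rfl | ⟨haP, hxa⟩ := ha
    · exact .refl t a
    by_cases htP : t ∈ P
    · exact (hxa t htP fun h => htQ (h ▸ mem_insert x _)).symm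
    · have hta : t ≠ a := fun h => htQ (h ▸ mem_insert_of_mem x ⟨haP, hxa⟩)
      exact hxa.relatesAlike_of_not_isTwinOver hP h3 hx
        (fun h => htQ (mem_insert_of_mem x ⟨htP, h⟩)) (hZ t htP a haP hta)
  obtain ⟨y, hy, hyx⟩ := (nontrivial_of_three_le_encard h3).exists_ne x
  refine hQ.not_isIndecomposableSubset
    ⟨x, mem_insert x _, w, mem_insert_of_mem x ⟨hw, hxw⟩, ne_of_mem_of_not_mem hx hw⟩
    fun hQ => ?_
  obtain rfl | ⟨hyP, -⟩ : y ∈ Q := hQ ▸ mem_univ y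
  exacts [hyx rfl, hyP hy]

theorem not_isIndecomposablePoset_of_forall_not_isTwinOver (hP : IsIndecomposableSubset P)
    (h3 : 3 ≤ P.encard) (hPc : Pᶜ.Nontrivial)
    (hZ : ∀ u ∉ P, ∀ w ∉ P, u ≠ w → ¬ IsIndecomposableSubset (insert u (insert w P)))
    (hno : ∀ x ∈ P, ∀ w ∉ P, ¬ IsTwinOver P x w) : ¬ IsIndecomposablePoset α := by
  set E := {u | u ∉ P ∧ IsIndecomposableSubset (insert u P)}
  have hPnt := nontrivial_of_three_le_encard h3
  obtain ⟨p, hp⟩ := hPnt.nonempty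
  by_cases hPE : P ∪ E = univ
  · have hEc : Pᶜ ⊆ E := fun t ht => (hPE ▸ mem_univ t : t ∈ P ∪ E).resolve_left ht
    refine IsOrderAutonomousIn.not_isIndecomposableSubset ⟨subset_univ E, ?_⟩ (hPc.mono hEc)
      fun hE => (hE ▸ mem_univ p : p ∈ E).1 hp
    rintro t ⟨-, htE⟩ a ⟨haP, ha⟩ b ⟨hbP, hb⟩
    have htP : t ∈ P := by_contra fun htP => htE (hEc htP)
    rcases eq_or_ne a b with rfl | hab
    · exact RelatesAlike.refl t a
    · exact relatesAlike_of_isIndecomposableSubset_insert hPnt haP ha hb (hZ a haP b hbP hab) htP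
  · have hU : ∀ t ∉ P ∪ E, IsUniformOver P t := by
      intro t ht
      obtain ⟨htP, htE⟩ := not_or.1 ht
      refine (hP.isUniformOver_or_isTwinOver fun h => htE ⟨htP, h⟩).resolve_right ?_
      rintro ⟨x, hx, hxt⟩
      exact hno x hx t htP hxt
    refine IsOrderAutonomousIn.not_isIndecomposableSubset
      (.of_relatesAlike (subset_univ _) p fun t _ ht a ha => ?_)
      (hPnt.mono subset_union_left) hPE
    rcases ha with haP | ⟨haP, ha⟩
    · exact hU t ht a haP p hp
    · have hta : a ≠ t := fun h => ht (h ▸ .inr ⟨haP, ha⟩)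
      exact (hU t ht).insert_of_isIndecomposableSubset_insert hP h3 haP ha
        (hZ a haP t (not_or.1 ht).1 hta) a (mem_insert a P) p (mem_insert_of_mem a hp)

end

/-- Schmerl–Trotter. If `T` is a finite indecomposable poset and
`P ⊆ T` is indecomposable with `4 ≤ |P| ≤ |T| - 2`, then there is an indecomposable
`U` with `P ⊂ U ⊆ T` and `|U| = |P| + 2`. -/
theorem schmerl_trotter {α : Type*} [PartialOrder α] [Fintype α]
    (hT : IsIndecomposablePoset α)
    (P : Set α) (hP : IsIndecomposableSubset P)
    (h4 : 4 ≤ P.ncard) (hle : P.ncard ≤ Fintype.card α - 2) :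
    ∃ U : Set α, IsIndecomposableSubset U ∧ P ⊂ U ∧ U.ncard = P.ncard + 2 := by
  by_contra! hcon
  have h3 : 3 ≤ P.encard := by
    rw [← P.toFinite.cast_ncard_eq]
    exact_mod_cast (by omega : 3 ≤ P.ncard)
  have hPc : Pᶜ.Nontrivial := by
    have := P.ncard_add_ncard_compl
    rw [Nat.card_eq_fintype_card] at this
    exact one_lt_ncard_iff_nontrivial.1 (by omega)
  have hZ :
      ∀ u ∉ P, ∀ w ∉ P, u ≠ w → ¬ IsIndecomposableSubset (insert u (insert w P)) := by
    intro u hu w hw huw hZ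
    refine hcon _ hZ ((ssubset_insert hw).trans_subset (subset_insert u _)) ?_
    rw [ncard_insert_of_notMem (by simp [hu, huw]), ncard_insert_of_notMem hw]
  by_cases htwin : ∃ x ∈ P, ∃ w ∉ P, IsTwinOver P x w
  · obtain ⟨x, hx, w, hw, hxw⟩ := htwin
    exact not_isIndecomposablePoset_of_isTwinOver hP h3 hZ hx hw hxw hT
  · push Not at htwin
    exact not_isIndecomposablePoset_of_forall_not_isTwinOver hP h3 hPc hZ htwin hT
end

section
/- Let T be a finite indecomposable partially ordered set with |T| > 2 and let a < b in T be such that the induced subposet T \ {t ∈ T : a < t < b} is series-decomposable. Then there is a subset H of T containing a and b such that (H, a, b) ∈ 𝒳 (with the induced order on H) and H is not isomorphic to the 4-element fence N (equivalently, |H| ≥ 5). -/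
/-!
The decomposition `T \ (a, b) = L ⊕ U` forces `a ∈ L` and `b ∈ U`, since otherwise `L` or `U`
would split all of `T` in series; hence every `x` not above `a` lies below every `y` not below
`b`. The connected components of the incomparability graph are autonomous, so in an
indecomposable poset this graph is connected; take a shortest path `a = f 0, …, f n = b` in it.
Consecutive vertices are incomparable and all other pairs comparable, and `a < b` propagates
along the path to `f i < f j` for `i + 2 ≤ j`. Such a zigzag grows from an `N` by adding new
maxima, so it lies in `𝒳`, and `n ≥ 4` because `f 1 < f (n - 1)`.
-/

open Set SimpleGraph

theorem SimpleGraph.Walk.not_adj_getVert_of_length_eq_dist {V : Type*} {G : SimpleGraph V}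
    {u v : V} {p : G.Walk u v} (hp : p.length = G.dist u v) {i j : ℕ} (hij : i + 2 ≤ j)
    (hj : j ≤ p.length) : ¬G.Adj (p.getVert i) (p.getVert j) := by
  intro hadj
  have := dist_le ((p.take i).append (.cons hadj (p.drop j)))
  simp only [Walk.length_append, Walk.take_length, Walk.length_cons, Walk.drop_length] at this
  omega

section

variable {α : Type*} [PartialOrder α]

lemma compl_compGraph_adj {x y : α} : (compGraph α)ᶜ.Adj x y ↔ ¬x ≤ y ∧ ¬y ≤ x := by
  rw [compl_adj]
  exact ⟨fun h => not_or.mp (h.2 ∘ And.intro h.1),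
    fun h => ⟨fun hxy => h.1 hxy.le, fun h' => not_or.mpr h h'.2⟩⟩

lemma lt_iff_lt_and_lt_iff_lt_of_incomp {t x y : α} (hxy : ¬x ≤ y ∧ ¬y ≤ x)
    (hx : t < x ∨ x < t) (hy : t < y ∨ y < t) : (t < x ↔ t < y) ∧ (x < t ↔ y < t) := by
  rcases hx with hx | hx <;> rcases hy with hy | hy
  · exact ⟨iff_of_true hx hy, iff_of_false (lt_asymm hx) (lt_asymm hy)⟩
  · exact absurd (hy.trans hx).le hxy.2
  · exact absurd (hx.trans hy).le hxy.1
  · exact ⟨iff_of_false (lt_asymm hx) (lt_asymm hy), iff_of_true hx hy⟩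

lemma isOrderAutonomousIn_univ_of_forall_lt {A : Set α} (h : ∀ t ∉ A, ∀ x ∈ A, t < x) :
    IsOrderAutonomousIn univ A :=
  ⟨subset_univ A, fun t ht x hx y hy =>
    ⟨iff_of_true (h t ht.2 x hx) (h t ht.2 y hy),
      iff_of_false (lt_asymm (h t ht.2 x hx)) (lt_asymm (h t ht.2 y hy))⟩⟩

lemma isOrderAutonomousIn_univ_of_forall_gt {A : Set α} (h : ∀ t ∉ A, ∀ x ∈ A, x < t) :
    IsOrderAutonomousIn univ A :=
  ⟨subset_univ A, fun t ht x hx y hy =>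
    ⟨iff_of_false (lt_asymm (h t ht.2 x hx)) (lt_asymm (h t ht.2 y hy)),
      iff_of_true (h t ht.2 x hx) (h t ht.2 y hy)⟩⟩

lemma isOrderAutonomousIn_univ_setOf_reachable (a : α) :
    IsOrderAutonomousIn univ {x | (compGraph α)ᶜ.Reachable a x} := by
  refine ⟨subset_univ _, fun t ht => ?_⟩
  have ht : ¬(compGraph α)ᶜ.Reachable a t := ht.2
  have hcomp : ∀ x, (compGraph α)ᶜ.Reachable a x → t < x ∨ x < t := by
    intro x hx
    have hne : t ≠ x := by rintro rfl; exact ht hx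
    by_contra! h
    exact ht (hx.trans (compl_compGraph_adj.mpr
      ⟨fun hxt => h.2 (hxt.lt_of_ne hne.symm), fun htx => h.1 (htx.lt_of_ne hne)⟩).reachable)
  have hside : ∀ x, (compGraph α)ᶜ.Reachable a x →
      (t < x ↔ t < a) ∧ (x < t ↔ a < t) := by
    intro x hx
    induction (reachable_iff_reflTransGen a x).mp hx with
    | refl => exact ⟨Iff.rfl, Iff.rfl⟩
    | tail hay hyx ih =>
      have hay := (reachable_iff_reflTransGen _ _).mpr hay
      have hstep := lt_iff_lt_and_lt_iff_lt_of_incomp (compl_compGraph_adj.mp hyx)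
        (hcomp _ hay) (hcomp _ (hay.trans hyx.reachable))
      exact ⟨hstep.1.symm.trans (ih hay).1, hstep.2.symm.trans (ih hay).2⟩
  intro x hx y hy
  exact ⟨(hside x hx).1.trans (hside y hy).1.symm, (hside x hx).2.trans (hside y hy).2.symm⟩

namespace IsIndecomposablePoset

theorem card_le_two_of_forall_lt_compl (hT : IsIndecomposablePoset α) {L : Set α}
    (hL : L.Nonempty) (hLc : Lᶜ.Nonempty) (hlt : ∀ l ∈ L, ∀ u ∉ L, l < u) :
    Nat.card α ≤ 2 := by
  have hL' : IsOrderAutonomousIn univ L :=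
    isOrderAutonomousIn_univ_of_forall_gt fun u hu l hl => hlt l hl u hu
  have hLc' : IsOrderAutonomousIn univ Lᶜ :=
    isOrderAutonomousIn_univ_of_forall_lt fun l hl u hu => hlt l (not_not.mp hl) u hu
  have hLsub : L.Subsingleton := (hT L hL').resolve_right
    fun h => hLc.ne_empty (by rw [h, compl_univ])
  have hLcsub : Lᶜ.Subsingleton := (hT Lᶜ hLc').resolve_right
    fun h => hL.ne_empty (by rw [← compl_compl L, h, compl_univ])
  calc Nat.card α = (L ∪ Lᶜ).ncard := by rw [union_compl_self, ncard_univ]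
    _ ≤ L.ncard + Lᶜ.ncard := ncard_union_le L Lᶜ
    _ ≤ 1 + 1 := add_le_add ((ncard_le_one hLsub.finite).mpr hLsub)
        ((ncard_le_one hLcsub.finite).mpr hLcsub)

theorem preconnected_compl_compGraph (hT : IsIndecomposablePoset α) (hcard : 2 < Nat.card α) :
    (compGraph α)ᶜ.Preconnected := by
  intro a b
  refine (hT _ (isOrderAutonomousIn_univ_setOf_reachable a)).elim (fun hsub => ?_)
    fun huniv => huniv.symm.subset (mem_univ b)
  have hcomp : ∀ x, x ≤ a ∨ a ≤ x := by
    intro x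
    by_contra! h
    have hx : (compGraph α)ᶜ.Reachable a x := (compl_compGraph_adj.mpr ⟨h.2, h.1⟩).reachable
    exact h.1 (hsub hx (Reachable.refl a)).le
  obtain ⟨x, -, hxa⟩ := exists_ne_of_one_lt_ncard (s := univ) (by rw [ncard_univ]; omega) a
  refine absurd ?_ hcard.not_ge
  rcases hcomp x with hx | hx
  · refine hT.card_le_two_of_forall_lt_compl (L := {y | y < a}) ⟨x, hx.lt_of_ne hxa⟩
      ⟨a, lt_irrefl a⟩ fun l hl u hu => hl.trans_le ?_
    exact (hcomp u).elim (fun h => (eq_of_le_of_not_lt h hu).ge) id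
  · refine hT.card_le_two_of_forall_lt_compl (L := {y | y ≤ a}) ⟨a, le_rfl⟩
      ⟨x, (hx.lt_of_ne hxa.symm).not_ge⟩ fun l hl u hu => hl.trans_lt ?_
    exact ((hcomp u).resolve_left hu).lt_of_ne fun h => hu h.ge

theorem lt_of_isSeriesDecomposable_diff_Ioo (hT : IsIndecomposablePoset α)
    (hcard : 2 < Nat.card α) {a b : α}
    (hS : IsSeriesDecomposable (univ \ {t : α | a < t ∧ t < b})) {x y : α}
    (hx : ¬a < x) (hy : ¬y < b) : x < y := by
  obtain ⟨L, U, hL, hU, hLU, -, hlt⟩ := hS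
  have hmem : ∀ z, z ∈ L ∨ z ∈ U ∨ (a < z ∧ z < b) := by
    intro z
    by_cases hz : a < z ∧ z < b
    · exact Or.inr (Or.inr hz)
    · have hz : z ∈ L ∪ U := hLU ▸ ⟨mem_univ z, hz⟩
      exact hz.elim Or.inl (Or.inr ∘ Or.inl)
  have haL : a ∈ L := by
    refine (hmem a).resolve_right fun ha => absurd ?_ hcard.not_ge
    have haU : a ∈ U := ha.resolve_right fun h => lt_irrefl a h.1
    refine hT.card_le_two_of_forall_lt_compl hL ⟨a, fun haL => lt_irrefl a (hlt a haL a haU)⟩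
      fun l hl u hu => ?_
    rcases hmem u with h | h | h
    exacts [absurd h hu, hlt l hl u h, (hlt l hl a haU).trans h.1]
  have hbU : b ∈ U := by
    refine ((hmem b).resolve_left fun hbL => absurd ?_ hcard.not_ge).resolve_right
      fun h => lt_irrefl b h.2
    obtain ⟨u, hu⟩ := hU
    refine hT.card_le_two_of_forall_lt_compl (L := Uᶜ)
      ⟨b, fun hbU => lt_irrefl b (hlt b hbL b hbU)⟩ ⟨u, not_not.mpr hu⟩ fun l hl u hu => ?_
    rw [notMem_compl_iff] at hu
    rcases hmem l with h | h | h
    exacts [hlt l h u hu, absurd h hl, h.2.trans (hlt b hbL u hu)]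
  have hxL : x ∈ L := (hmem x).resolve_right fun h =>
    h.elim (fun hxU => hx (hlt a haL x hxU)) fun h => hx h.1
  have hyU : y ∈ U := ((hmem y).resolve_left fun hyL => hy (hlt y hyL b hbU)).elim id
    fun h => absurd h.2 hy
  exact hlt x hxL y hyU

end IsIndecomposablePoset

theorem SimpleGraph.Walk.lt_or_gt_getVert_of_length_eq_dist {u v : α}
    {p : (compGraph α)ᶜ.Walk u v} (hp : p.length = (compGraph α)ᶜ.dist u v) {i j : ℕ}
    (hij : i + 2 ≤ j) (hj : j ≤ p.length) :
    p.getVert i < p.getVert j ∨ p.getVert j < p.getVert i := by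
  have hne : p.getVert i ≠ p.getVert j := fun h => by
    have := (p.isPath_of_length_eq_dist hp).getVert_injOn (show i ≤ p.length by omega) hj h
    omega
  have hcomp := p.not_adj_getVert_of_length_eq_dist hp hij hj
  rw [compl_compGraph_adj, not_and_or, not_not, not_not] at hcomp
  exact hcomp.imp hne.lt_of_le fun h => hne.symm.lt_of_le h

theorem lt_of_zigzag {f : ℕ → α} {n : ℕ}
    (hadj : ∀ i < n, ¬f i ≤ f (i + 1) ∧ ¬f (i + 1) ≤ f i)
    (hcomp : ∀ i j, i + 2 ≤ j → j ≤ n → f i < f j ∨ f j < f i) (h0n : f 0 < f n)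
    {i j : ℕ} (hij : i + 2 ≤ j) (hj : j ≤ n) : f i < f j := by
  have hzero : ∀ k, 2 ≤ k → k ≤ n → f 0 < f k := by
    intro k hk hkn
    induction hkn using Nat.decreasingInduction with
    | self => exact h0n
    | of_succ k hkn ih =>
      exact (lt_iff_lt_and_lt_iff_lt_of_incomp (hadj k hkn) (hcomp 0 k (by omega) hkn.le)
        (Or.inl (ih (by omega)))).1.mpr (ih (by omega))
  induction i with
  | zero => exact hzero j hij hj
  | succ i ih =>
    exact (lt_iff_lt_and_lt_iff_lt_of_incomp (hadj i (by omega)) (hcomp i j (by omega) hj).symm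
      (hcomp (i + 1) j hij hj).symm).2.mp (ih (by omega))

theorem four_le_of_zigzag {f : ℕ → α} {n : ℕ}
    (hadj : ∀ i < n, ¬f i ≤ f (i + 1) ∧ ¬f (i + 1) ≤ f i) (h0n : f 0 < f n)
    (hsep : ∀ x y, ¬f 0 < x → ¬y < f n → x < y) : 4 ≤ n := by
  by_contra! hn
  interval_cases n
  · exact lt_irrefl _ h0n
  · exact (hadj 0 one_pos).1 h0n.le
  · exact lt_irrefl _ (hsep (f 1) (f 1) (fun h => (hadj 0 (by omega)).1 h.le)
      fun h => (hadj 1 (by omega)).1 h.le)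
  · exact (hadj 1 (by omega)).1 (hsep (f 1) (f 2) (fun h => (hadj 0 (by omega)).1 h.le)
      fun h => (hadj 2 (by omega)).1 h.le).le

theorem inX_image_Iic_of_zigzag {f : ℕ → α} {n : ℕ} (hn : 3 ≤ n)
    (hadj : ∀ i < n, ¬f i ≤ f (i + 1) ∧ ¬f (i + 1) ≤ f i)
    (hlt : ∀ i j, i + 2 ≤ j → j ≤ n → f i < f j) : InX (f '' Iic n) (f 0) (f n) := by
  induction n, hn using Nat.le_induction with
  | base =>
    have hIic : Iic 3 = {1, 0, 3, 2} := by
      ext; simp only [mem_Iic, mem_insert_iff, mem_singleton_iff]; omega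
    rw [hIic, image_insert_eq, image_insert_eq, image_insert_eq, image_singleton]
    exact InX.base (hlt 1 3 le_rfl le_rfl) (hlt 0 3 (by omega) le_rfl)
      (hlt 0 2 le_rfl (by omega)) (hadj 0 (by omega)).symm (hadj 1 (by omega))
      (hadj 2 (by omega)).symm
  | succ n hn ih =>
    have hIic : Iic (n + 1) = insert (n + 1) (Iic n) := by
      ext; simp only [mem_Iic, mem_insert_iff]; omega
    rw [hIic, image_insert_eq]
    have hP := ih (fun i hi => hadj i (by omega)) fun i j hij hj => hlt i j hij (by omega)
    refine InX.addMax hP ?_ ?_ (hadj n (by omega)).symm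
    · rintro ⟨i, hi, hfi⟩
      rcases (mem_Iic.mp hi).lt_or_eq with hi | rfl
      exacts [(hlt i (n + 1) (by omega) le_rfl).ne hfi, (hadj i (by omega)).1 hfi.le]
    · rintro _ ⟨⟨i, hi, rfl⟩, hne⟩
      have hin : i ≠ n := by rintro rfl; exact hne rfl
      exact hlt i (n + 1) (by rw [mem_Iic] at hi; omega) le_rfl

end

/-- Lemma `2chnocovlem`. If `T` is finite indecomposable with `|T| > 2`,
`a < b`, and `T \ {t : a < t < b}` is series-decomposable, then `{a, b}` is contained in
an `H ⊆ T` with `(H, a, b) ∈ 𝒳` and `H` not isomorphic to `N`, i.e. `|H| ≥ 5`. -/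
theorem twoChain_noncover_lemma {α : Type*} [PartialOrder α] [Fintype α]
    (hT : IsIndecomposablePoset α) (hcard : 2 < Fintype.card α)
    {a b : α} (hab : a < b)
    (hS : IsSeriesDecomposable (Set.univ \ {t : α | a < t ∧ t < b})) :
    ∃ H : Set α, a ∈ H ∧ b ∈ H ∧ InX H a b ∧ 5 ≤ H.ncard := by
  rw [← Nat.card_eq_fintype_card] at hcard
  obtain ⟨p, hp⟩ := (hT.preconnected_compl_compGraph hcard a b).exists_walk_length_eq_dist
  set f := p.getVert
  set n := p.length
  have hf0 : f 0 = a := p.getVert_zero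
  have hfn : f n = b := p.getVert_length
  have hadj : ∀ i < n, ¬f i ≤ f (i + 1) ∧ ¬f (i + 1) ≤ f i := fun i hi =>
    compl_compGraph_adj.mp (p.adj_getVert_succ hi)
  have hlt : ∀ i j, i + 2 ≤ j → j ≤ n → f i < f j := fun i j =>
    lt_of_zigzag hadj (fun _ _ => p.lt_or_gt_getVert_of_length_eq_dist hp) (hf0 ▸ hfn ▸ hab)
  have hn : 4 ≤ n := four_le_of_zigzag hadj (hf0 ▸ hfn ▸ hab) fun x y hx hy =>
    hT.lt_of_isSeriesDecomposable_diff_Ioo hcard hS (hf0 ▸ hx) (hfn ▸ hy)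
  refine ⟨f '' Iic n, ⟨0, Nat.zero_le n, hf0⟩, ⟨n, self_mem_Iic, hfn⟩,
    hf0 ▸ hfn ▸ inX_image_Iic_of_zigzag (by omega) hadj hlt, ?_⟩
  have hinj : InjOn f (Iic n) := (p.isPath_of_length_eq_dist hp).getVert_injOn
  rw [hinj.ncard_image, ncard_Iic_nat]
  omega
end

section
/- Let T be a finite indecomposable partially ordered set with |T| > 2, let b be an upper cover of a, suppose a has at least two upper covers, and suppose that any two upper covers of a have the same strict lower bounds. Then there exist w, ℓ ∈ T with w > a, ℓ < w, and ℓ incomparable to a and incomparable to b. -/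
/-!
If no such `w` and `ℓ` existed, the set `{x | a < x}` of strict upper bounds of `a` would be
order-autonomous: an element `t` outside it lies below some `w > a` only if `t = a`, `t < a`
or `t < b`, and in the last case `t` lies below every upper cover of `a`, hence below every
element above `a`. This set contains the two distinct upper covers of `a` but not `a` itself,
contradicting indecomposability.
-/

section

variable {α : Type*} [PartialOrder α] {a b : α}

theorem lt_of_lt_of_forall_covBy [IsStronglyAtomic α] (hbelow : ∀ x, a ⋖ x → ∀ t < b, t < x)
    {t y : α} (htb : t < b) (hay : a < y) : t < y := by
  obtain ⟨x, hax, hxy⟩ := exists_covBy_le_of_lt hay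
  exact (hbelow x hax t htb).trans_le hxy

theorem lt_of_lt_of_not_lt_of_forall_comparable [IsStronglyAtomic α] (hab : a < b)
    (hbelow : ∀ x, a ⋖ x → ∀ t < b, t < x)
    (hcomp : ∀ w l : α, a < w → l < w → l ≤ a ∨ a ≤ l ∨ l ≤ b ∨ b ≤ l)
    {t w y : α} (hat : ¬ a < t) (haw : a < w) (htw : t < w) (hay : a < y) : t < y := by
  rcases eq_or_ne t a with rfl | hta
  · exact hay
  rcases hcomp w t haw htw with hle | hle | hle | hle
  · exact (hle.lt_of_ne hta).trans hay
  · exact absurd (hle.lt_of_ne hta.symm) hat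
  · exact lt_of_lt_of_forall_covBy hbelow (hle.lt_of_ne (by rintro rfl; exact hat hab)) hay
  · exact absurd (hab.trans_le hle) hat

theorem isOrderAutonomousIn_univ_Ioi [IsStronglyAtomic α] (hab : a < b)
    (hbelow : ∀ x, a ⋖ x → ∀ t < b, t < x)
    (hcomp : ∀ w l : α, a < w → l < w → l ≤ a ∨ a ≤ l ∨ l ≤ b ∨ b ≤ l) :
    IsOrderAutonomousIn Set.univ (Set.Ioi a) := by
  refine ⟨Set.subset_univ _, fun t ⟨_, hat⟩ w₁ hw₁ w₂ hw₂ => ⟨?_, ?_⟩⟩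
  · exact ⟨fun h => lt_of_lt_of_not_lt_of_forall_comparable hab hbelow hcomp hat hw₁ h hw₂,
      fun h => lt_of_lt_of_not_lt_of_forall_comparable hab hbelow hcomp hat hw₂ h hw₁⟩
  · exact ⟨fun h => absurd (hw₁.trans h) hat, fun h => absurd (hw₂.trans h) hat⟩

end

theorem exists_w_l_general {α : Type*} [PartialOrder α] [Fintype α]
    (hT : IsIndecomposablePoset α)
    {a b : α} (hcov : a ⋖ b)
    (htwo : ∃ x : α, a ⋖ x ∧ x ≠ b)
    (hsame : ∀ x y : α, a ⋖ x → a ⋖ y → ∀ t : α, t < x ↔ t < y) :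
    ∃ w l : α, a < w ∧ l < w ∧ (¬ l ≤ a ∧ ¬ a ≤ l) ∧ (¬ l ≤ b ∧ ¬ b ≤ l) := by
  by_contra hnone
  have hcomp : ∀ w l : α, a < w → l < w → l ≤ a ∨ a ≤ l ∨ l ≤ b ∨ b ≤ l := by
    intro w l haw hlw
    by_contra! h
    exact hnone ⟨w, l, haw, hlw, ⟨h.1, h.2.1⟩, h.2.2.1, h.2.2.2⟩
  have haut := isOrderAutonomousIn_univ_Ioi hcov.lt
    (fun x hax t => (hsame b x hcov hax t).1) hcomp
  obtain ⟨c, hac, hcb⟩ := htwo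
  rcases hT _ haut with hsub | huniv
  · exact hcb (hsub hac.lt hcov.lt)
  · exact lt_irrefl a (huniv.symm ▸ Set.mem_univ a : a ∈ Set.Ioi a)

/-- If `T` is finite indecomposable with `|T| > 2`, `b` is an upper
cover of `a`, `a` has at least two upper covers, and any two upper covers of `a` have
the same strict lower bounds, then there exist `w > a` and `ℓ < w` with `ℓ` incomparable
to both `a` and `b`. -/
theorem exists_w_l {α : Type*} [PartialOrder α] [Fintype α]
    (hT : IsIndecomposablePoset α) (hcard : 2 < Fintype.card α)
    {a b : α} (hcov : a ⋖ b)
    (htwo : ∃ x : α, a ⋖ x ∧ x ≠ b)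
    (hsame : ∀ x y : α, a ⋖ x → a ⋖ y → ∀ t : α, t < x ↔ t < y) :
    ∃ w l : α, a < w ∧ l < w ∧ (¬ l ≤ a ∧ ¬ a ≤ l) ∧ (¬ l ≤ b ∧ ¬ b ≤ l) :=
  exists_w_l_general hT hcov htwo hsame
end

section
/- Every indecomposable V-cover is, as a finite partially ordered set, indecomposable. -/
/-!
Let `A` be an autonomous set with at least two elements. If `A` contains both minimal elements,
every element outside `A` lies above `l`, hence above `d`, so it is `h`; then `a ∈ A`, and
`h ∉ A` would lie above `a`. If `A` contains `l` but not `d`, then `h ∉ A` (it lies above `d`),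
so `h` lies above all of `A`; thus `a ∉ A`, and `a` lies above the other elements of `A`, which
are on the fence. If `l ∉ A`, then also `d, h ∉ A` and `A` meets the fence; the last fence
element in `A` has a fence neighbour outside `A`, which must be comparable to all of `A`, yet it
is incomparable to `a` and to the earlier fence elements.
-/

namespace IsOrderAutonomousIn

variable {α : Type*} [PartialOrder α] {S A : Set α} {t x y : α}

theorem lt_iff_lt (hA : IsOrderAutonomousIn S A) (ht : t ∈ S \ A) (hx : x ∈ A) (hy : y ∈ A) :
    t < x ↔ t < y :=
  (hA.2 t ht x hx y hy).1

theorem gt_iff_gt (hA : IsOrderAutonomousIn S A) (ht : t ∈ S \ A) (hx : x ∈ A) (hy : y ∈ A) :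
    x < t ↔ y < t :=
  (hA.2 t ht x hx y hy).2

theorem lt_or_gt_of_lt_or_gt (hA : IsOrderAutonomousIn S A) (ht : t ∈ S \ A) (hx : x ∈ A)
    (hy : y ∈ A) (htx : t < x ∨ x < t) : t < y ∨ y < t :=
  htx.imp (hA.lt_iff_lt ht hx hy).1 (hA.gt_iff_gt ht hx hy).1

end IsOrderAutonomousIn

/-- `u` is the last element of the fence lying in `A` and `t` the next one. -/
theorem IsFenceFrom.exists_mem_comparable_notMem {α : Type*} [PartialOrder α] {F A : Set α}
    {x y : α} (hF : IsFenceFrom F x y) (hAF : (A ∩ F).Nonempty) (hy : y ∉ A) :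
    ∃ u ∈ A ∩ F, ∃ t ∈ F \ A, (t < u ∨ u < t) ∧
      ∀ z ∈ A ∩ F, z ≠ u → ¬ z ≤ t ∧ ¬ t ≤ z := by
  classical
  obtain ⟨n, f, -, rfl, -, rfl, hfar, halt⟩ := hF
  have hnext : ∀ i : Fin n, f i.succ < f i.castSucc ∨ f i.castSucc < f i.succ := by
    intro i
    rcases halt with halt | halt <;> have hi := halt i <;> split_ifs at hi <;> simp [hi]
  obtain ⟨-, hkA, k, rfl⟩ := hAF
  obtain ⟨m, hmA, hmax⟩ := (Finset.univ.filter fun i => f i ∈ A).exists_max_image id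
    ⟨k, by simpa using hkA⟩
  simp only [Finset.mem_filter, Finset.mem_univ, true_and, id] at hmA hmax
  obtain ⟨i, rfl⟩ : ∃ i : Fin n, i.castSucc = m :=
    Fin.exists_castSucc_eq.2 fun hm => hy (hm ▸ hmA)
  have hsucc : f i.succ ∉ A := fun hs => (hmax _ hs).not_gt Fin.castSucc_lt_succ
  refine ⟨f i.castSucc, ⟨hmA, i.castSucc, rfl⟩, f i.succ, ⟨⟨i.succ, rfl⟩, hsucc⟩,
    hnext i, ?_⟩
  rintro _ ⟨hjA, j, rfl⟩ hji
  have hj : j < i.castSucc := (hmax j hjA).lt_of_ne fun e => hji (e ▸ rfl)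
  exact hfar j i.succ (by simp only [Fin.val_succ]; exact Nat.succ_lt_succ hj)

namespace IsIndecVCover

variable {β : Type*} [PartialOrder β] {l d a b h : β} {F : Set β}
  (hC : IsIndecVCover l d a b h F)
include hC

theorem isMin_l : IsMin l := hC.2.1

theorem isMin_d : IsMin d := hC.2.2.1

theorem eq_or_eq_of_isMin {z : β} (hz : IsMin z) : z = l ∨ z = d := hC.2.2.2.1 z hz

theorem l_lt_iff {z : β} : l < z ↔ z = a ∨ z ∈ F := by
  rw [← Set.mem_insert_iff, ← hC.2.2.2.2.1]; rfl

theorem d_lt_iff {z : β} : d < z ↔ z = h := by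
  rw [← Set.mem_singleton_iff, ← hC.2.2.2.2.2.2.2.2.2]; rfl

theorem a_notMem : a ∉ F := hC.2.2.2.2.2.1

theorem incomparable_a {z : β} (hz : z ∈ F) : ¬ a ≤ z ∧ ¬ z ≤ a := hC.2.2.2.2.2.2.1 z hz

theorem isFenceFrom : IsFenceFrom F b h := hC.2.2.2.2.2.2.2.1

theorem h_mem : h ∈ F := by
  obtain ⟨n, f, -, rfl, -, rfl, -⟩ := hC.isFenceFrom
  exact ⟨_, rfl⟩

theorem a_ne_h : a ≠ h := fun e => hC.a_notMem (e ▸ hC.h_mem)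

theorem l_lt_a : l < a := hC.l_lt_iff.2 (Or.inl rfl)

theorem l_lt_h : l < h := hC.l_lt_iff.2 (Or.inr hC.h_mem)

theorem isMax_a : IsMax a := by
  intro z haz
  rcases hC.l_lt_iff.1 (hC.l_lt_a.trans_le haz) with rfl | hz
  · exact le_rfl
  · exact absurd haz (hC.incomparable_a hz).1

theorem eq_or_eq_or_eq_or_mem [Finite β] (z : β) : z = l ∨ z = d ∨ z = a ∨ z ∈ F := by
  obtain ⟨m, hmz, hm⟩ := exists_minimal_le_of_wellFoundedLT (fun _ => True) z trivial
  rcases (hC.eq_or_eq_of_isMin (minimal_true.1 hm)).imp (· ▸ hmz) (· ▸ hmz) with hlz | hdz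
  · rcases hlz.eq_or_lt with rfl | hlz
    · exact Or.inl rfl
    · exact Or.inr (Or.inr (hC.l_lt_iff.1 hlz))
  · rcases hdz.eq_or_lt with rfl | hdz
    · exact Or.inr (Or.inl rfl)
    · exact Or.inr (Or.inr (Or.inr (hC.d_lt_iff.1 hdz ▸ hC.h_mem)))

theorem l_lt_of_ne [Finite β] {z : β} (hzl : z ≠ l) (hzd : z ≠ d) : l < z := by
  rcases hC.eq_or_eq_or_eq_or_mem z with rfl | rfl | hz
  exacts [absurd rfl hzl, absurd rfl hzd, hC.l_lt_iff.2 hz]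

variable {A : Set β} (hA : IsOrderAutonomousIn Set.univ A)
include hA

theorem eq_univ_of_l_mem_of_d_mem [Finite β] (hl : l ∈ A) (hd : d ∈ A) : A = Set.univ := by
  have hout : ∀ z ∉ A, z = h := fun z hz =>
    hC.d_lt_iff.1 <| (hA.gt_iff_gt ⟨trivial, hz⟩ hl hd).1 <|
      hC.l_lt_of_ne (fun e => hz (e ▸ hl)) (fun e => hz (e ▸ hd))
  have ha : a ∈ A := by_contra fun ha => hC.a_ne_h (hout a ha)
  refine Set.eq_univ_of_forall fun z => by_contra fun hz => ?_
  obtain rfl := hout z hz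
  exact hC.isMax_a.not_lt ((hA.gt_iff_gt ⟨trivial, hz⟩ hl ha).1 hC.l_lt_h)

theorem subsingleton_of_l_mem_of_d_notMem [Finite β] (hl : l ∈ A) (hd : d ∉ A) :
    A.Subsingleton := by
  have hh : h ∉ A := fun hh =>
    hC.isMin_l.not_lt ((hA.lt_iff_lt ⟨trivial, hd⟩ hh hl).1 (hC.d_lt_iff.2 rfl))
  have ha : a ∉ A := fun ha =>
    hC.isMax_a.not_lt ((hA.gt_iff_gt ⟨trivial, hh⟩ hl ha).1 hC.l_lt_h)
  refine Set.not_nontrivial_iff.1 fun hA2 => ?_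
  obtain ⟨z, hz, hzl⟩ := hA2.exists_ne l
  have hzF : z ∈ F := by
    rcases hC.eq_or_eq_or_eq_or_mem z with rfl | rfl | rfl | hzF
    exacts [absurd rfl hzl, absurd hz hd, absurd hz ha, hzF]
  exact (hC.incomparable_a hzF).2 ((hA.gt_iff_gt ⟨trivial, ha⟩ hl hz).1 hC.l_lt_a).le

theorem subsingleton_of_l_notMem [Finite β] (hl : l ∉ A) : A.Subsingleton := by
  refine Set.not_nontrivial_iff.1 fun hA2 => ?_
  have hd : d ∉ A := fun hd => by
    obtain ⟨z, hz, hzd⟩ := hA2.exists_ne d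
    exact hC.isMin_d.not_lt <|
      (hA.lt_iff_lt ⟨trivial, hl⟩ hz hd).1 (hC.l_lt_of_ne (fun e => hl (e ▸ hz)) hzd)
  have hh : h ∉ A := fun hh => by
    obtain ⟨z, hz, hzh⟩ := hA2.exists_ne h
    exact hzh (hC.d_lt_iff.1 ((hA.lt_iff_lt ⟨trivial, hd⟩ hh hz).1 (hC.d_lt_iff.2 rfl)))
  have hAF : ∀ z ∈ A, z ≠ a → z ∈ F := fun z hz hza => by
    rcases hC.eq_or_eq_or_eq_or_mem z with rfl | rfl | rfl | hzF
    exacts [absurd hz hl, absurd hz hd, absurd rfl hza, hzF]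
  obtain ⟨z₀, hz₀, hz₀a⟩ := hA2.exists_ne a
  obtain ⟨u, ⟨hu, -⟩, t, ⟨htF, ht⟩, htu, hfar⟩ :=
    hC.isFenceFrom.exists_mem_comparable_notMem ⟨z₀, hz₀, hAF z₀ hz₀ hz₀a⟩ hh
  obtain ⟨z, hz, hzu⟩ := hA2.exists_ne u
  have hinc : ¬ z ≤ t ∧ ¬ t ≤ z := by
    by_cases hza : z = a
    · exact hza ▸ hC.incomparable_a htF
    · exact hfar z ⟨hz, hAF z hz hza⟩ hzu
  rcases hA.lt_or_gt_of_lt_or_gt ⟨trivial, ht⟩ hu hz htu with htz | hzt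
  exacts [hinc.2 htz.le, hinc.1 hzt.le]

end IsIndecVCover

/-- Every indecomposable V-cover is indecomposable. -/
theorem vCover_indecomposable {β : Type*} [PartialOrder β] [Fintype β]
    {l d a b h : β} {F : Set β} (hC : IsIndecVCover l d a b h F) :
    IsIndecomposablePoset β := by
  intro A hA
  by_cases hl : l ∈ A
  · by_cases hd : d ∈ A
    · exact Or.inr (hC.eq_univ_of_l_mem_of_d_mem hA hl hd)
    · exact Or.inl (hC.subsingleton_of_l_mem_of_d_notMem hA hl hd)
  · exact Or.inl (hC.subsingleton_of_l_notMem hA hl)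
end

section
/- Let C be an indecomposable V-cover with distinguished elements a and b. If I ⊆ C is indecomposable (with the induced order) and {a, b} ⊊ I, then I = C. -/
/-!
Every element of `C` lies above one of the two minimal elements `l`, `d`, so `C = {l, d, a} ∪ F`,
and it suffices to show that `l`, the fence `F` and `d` lie in `I`. If one of them did not, `I`
would have a proper order-autonomous subset containing two distinct elements:
* without `l`, the element `a` is incomparable to everything else in `I`, so `I \ {a}` is
  autonomous (it contains `b` and a third element of `I`);
* if the fence first leaves `I` at index `k`, then `a` together with the fence elements before `k`
  is autonomous: apart from `l`, which lies below all of them, nothing left in `I` is comparable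
  to any of them, because fence elements two steps apart are incomparable and `d` is comparable
  only to the last fence element `h`;
* without `d`, everything in `I` except `l` lies above `l`, so `I \ {l}` is autonomous.
-/

open Set

section Order

variable {α : Type*} [PartialOrder α]

theorem isOrderAutonomousIn_of_uniform {S A : Set α} (hAS : A ⊆ S)
    (h : ∀ t ∈ S \ A,
      (∀ x ∈ A, t < x) ∨ (∀ x ∈ A, x < t) ∨ ∀ x ∈ A, ¬ t < x ∧ ¬ x < t) :
    IsOrderAutonomousIn S A := by
  refine ⟨hAS, fun t ht a₁ ha₁ a₂ ha₂ => ?_⟩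
  rcases h t ht with hlt | hgt | hinc
  · exact ⟨iff_of_true (hlt a₁ ha₁) (hlt a₂ ha₂),
      iff_of_false (hlt a₁ ha₁).asymm (hlt a₂ ha₂).asymm⟩
  · exact ⟨iff_of_false (hgt a₁ ha₁).asymm (hgt a₂ ha₂).asymm,
      iff_of_true (hgt a₁ ha₁) (hgt a₂ ha₂)⟩
  · exact ⟨iff_of_false (hinc a₁ ha₁).1 (hinc a₂ ha₂).1,
      iff_of_false (hinc a₁ ha₁).2 (hinc a₂ ha₂).2⟩

theorem IsIndecomposableSubset.mem_of_isOrderAutonomousIn {S A : Set α}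
    (hS : IsIndecomposableSubset S) (hA : IsOrderAutonomousIn S A) {x y z : α} (hx : x ∈ A)
    (hy : y ∈ A) (hxy : x ≠ y) (hz : z ∈ S) : z ∈ A :=
  ((hS A hA).resolve_left fun hA_sub => hxy (hA_sub hx hy)) ▸ hz

theorem exists_isMin_le [WellFoundedLT α] (x : α) : ∃ m ≤ x, IsMin m := by
  obtain ⟨m, hmx, hm⟩ := exists_minimal_le_of_wellFoundedLT (fun _ => True) x trivial
  exact ⟨m, hmx, minimal_true.mp hm⟩

end Order

namespace IsIndecVCover

variable {β : Type*} [PartialOrder β] {l d a b h x : β} {F : Set β}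

theorem l_lt_iff_s12 (hC : IsIndecVCover l d a b h F) : l < x ↔ x = a ∨ x ∈ F :=
  Set.ext_iff.mp hC.2.2.2.2.1 x

theorem d_lt_iff_s12 (hC : IsIndecVCover l d a b h F) : d < x ↔ x = h :=
  Set.ext_iff.mp hC.2.2.2.2.2.2.2.2.2 x

theorem incomparable_a_s12 (hC : IsIndecVCover l d a b h F) (hx : x ∈ F) : ¬ a < x ∧ ¬ x < a :=
  ⟨fun hax => (hC.2.2.2.2.2.2.1 x hx).1 hax.le, fun hxa => (hC.2.2.2.2.2.2.1 x hx).2 hxa.le⟩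

theorem a_notMem_s12 (hC : IsIndecVCover l d a b h F) : a ∉ F :=
  hC.2.2.2.2.2.1

theorem isMin_d_s12 (hC : IsIndecVCover l d a b h F) : IsMin d :=
  hC.2.2.1

theorem isFenceFrom_s12 (hC : IsIndecVCover l d a b h F) : IsFenceFrom F b h :=
  hC.2.2.2.2.2.2.2.1

theorem b_mem (hC : IsIndecVCover l d a b h F) : b ∈ F := by
  obtain ⟨n, f, -, rfl, hf0, -⟩ := hC.isFenceFrom_s12
  exact ⟨0, hf0⟩

theorem h_mem_s12 (hC : IsIndecVCover l d a b h F) : h ∈ F := by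
  obtain ⟨n, f, -, rfl, -, hf_last, -⟩ := hC.isFenceFrom_s12
  exact ⟨Fin.last n, hf_last⟩

theorem a_ne_b (hC : IsIndecVCover l d a b h F) : a ≠ b :=
  fun hab => hC.a_notMem_s12 (hab ▸ hC.b_mem)

theorem l_lt_a_s12 (hC : IsIndecVCover l d a b h F) : l < a :=
  hC.l_lt_iff_s12.mpr (Or.inl rfl)

theorem l_lt_of_mem (hC : IsIndecVCover l d a b h F) (hx : x ∈ F) : l < x :=
  hC.l_lt_iff_s12.mpr (Or.inr hx)

theorem not_a_lt (hC : IsIndecVCover l d a b h F) (x : β) : ¬ a < x := by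
  intro hax
  rcases hC.l_lt_iff_s12.mp (hC.l_lt_a_s12.trans hax) with rfl | hx
  · exact hax.false
  · exact (hC.incomparable_a_s12 hx).1 hax

theorem eq_or_eq_or_eq_or_mem_s12 [WellFoundedLT β] (hC : IsIndecVCover l d a b h F) (x : β) :
    x = l ∨ x = d ∨ x = a ∨ x ∈ F := by
  obtain ⟨m, hmx, hm⟩ := exists_isMin_le x
  rcases hC.2.2.2.1 m hm with rfl | rfl
  · rcases hmx.eq_or_lt with rfl | hlx
    · exact Or.inl rfl
    · exact Or.inr (Or.inr (hC.l_lt_iff_s12.mp hlx))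
  · rcases hmx.eq_or_lt with rfl | hdx
    · exact Or.inr (Or.inl rfl)
    · exact Or.inr (Or.inr (Or.inr (hC.d_lt_iff_s12.mp hdx ▸ hC.h_mem_s12)))

theorem l_lt_of_ne_s12 [WellFoundedLT β] (hC : IsIndecVCover l d a b h F) (hxl : x ≠ l)
    (hxd : x ≠ d) : l < x := by
  rcases hC.eq_or_eq_or_eq_or_mem_s12 x with rfl | rfl | rfl | hx
  exacts [absurd rfl hxl, absurd rfl hxd, hC.l_lt_a_s12, hC.l_lt_of_mem hx]

theorem eq_l_of_lt_a [WellFoundedLT β] (hC : IsIndecVCover l d a b h F) (hxa : x < a) :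
    x = l := by
  by_contra hxl
  have hxd : x ≠ d := by
    rintro rfl
    exact hC.a_notMem_s12 (hC.d_lt_iff_s12.mp hxa ▸ hC.h_mem_s12)
  rcases hC.l_lt_iff_s12.mp (hC.l_lt_of_ne_s12 hxl hxd) with rfl | hx
  · exact hxa.false
  · exact (hC.incomparable_a_s12 hx).2 hxa

theorem l_mem_of_indecomposable [WellFoundedLT β] (hC : IsIndecVCover l d a b h F) {I : Set β}
    (hI : IsIndecomposableSubset I) (hsub : ({a, b} : Set β) ⊂ I) : l ∈ I := by
  by_contra hlI
  have haI : a ∈ I := hsub.1 (mem_insert a {b})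
  have hA : IsOrderAutonomousIn I (I \ {a}) := by
    refine isOrderAutonomousIn_of_uniform sdiff_subset fun t ht => ?_
    obtain rfl : t = a := not_not.mp fun hta => ht.2 ⟨ht.1, hta⟩
    exact Or.inr (Or.inr fun x hx =>
      ⟨hC.not_a_lt x, fun hxa => hlI (hC.eq_l_of_lt_a hxa ▸ hx.1)⟩)
  obtain ⟨c, hcI, hcab⟩ := exists_of_ssubset hsub
  simp only [mem_insert_iff, mem_singleton_iff, not_or] at hcab
  have hbA : b ∈ I \ {a} := ⟨hsub.1 (mem_insert_of_mem a rfl), hC.a_ne_b.symm⟩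
  exact (hI.mem_of_isOrderAutonomousIn hA ⟨hcI, hcab.1⟩ hbA hcab.2 haI).2 rfl

theorem fence_subset_of_indecomposable [WellFoundedLT β] (hC : IsIndecVCover l d a b h F)
    {I : Set β} (hI : IsIndecomposableSubset I) (haI : a ∈ I) (hbI : b ∈ I) (hlI : l ∈ I) :
    F ⊆ I := by
  obtain ⟨n, f, hf_inj, rfl, hf0, hf_last, hf_far, -⟩ := hC.isFenceFrom_s12
  rintro - ⟨j, rfl⟩
  by_contra hj
  obtain ⟨k, -, hk⟩ := exists_minimal_le_of_wellFoundedLT (fun i => f i ∉ I) j hj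
  have hk0 : 0 < k := pos_of_ne_zero fun hk0 => hk.1 (hk0 ▸ hf0 ▸ hbI)
  set A := insert a (f '' Iio k)
  have hAI : A ⊆ I := insert_subset haI <| image_subset_iff.mpr fun i hik =>
    not_not.mp (hk.not_prop_of_lt hik)
  have hhA : h ∉ A := by
    rintro (hha | ⟨i, hik, hfi⟩)
    · exact hC.a_notMem_s12 (hha ▸ hC.h_mem_s12)
    · exact (hf_inj (hfi.trans hf_last.symm) ▸ hik).not_ge (Fin.le_last k)
  have hlA : l ∉ A := by
    rintro (hla | ⟨i, -, hfi⟩)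
    · exact hC.l_lt_a_s12.ne hla
    · exact (hC.l_lt_of_mem ⟨i, hfi⟩).false
  have hA : IsOrderAutonomousIn I A := by
    refine isOrderAutonomousIn_of_uniform hAI fun t ⟨htI, htA⟩ => ?_
    rcases hC.eq_or_eq_or_eq_or_mem_s12 t with rfl | rfl | rfl | ⟨i, rfl⟩
    · exact Or.inl fun x hx => hC.l_lt_iff_s12.mpr (insert_subset_insert (image_subset_range f _) hx)
    · exact Or.inr <| Or.inr fun x hx =>
        ⟨fun hdx => hhA (hC.d_lt_iff_s12.mp hdx ▸ hx), hC.isMin_d_s12.not_lt⟩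
    · exact absurd (mem_insert _ _) htA
    · have hki : k < i := lt_of_le_of_ne (not_lt.mp fun hik => htA (Or.inr ⟨i, hik, rfl⟩))
        fun hki => hk.1 (hki ▸ htI)
      refine Or.inr <| Or.inr fun x hx => ?_
      rcases hx with rfl | ⟨i', hi'k, rfl⟩
      · exact (hC.incomparable_a_s12 ⟨i, rfl⟩).symm
      · have hinc := hf_far i' i (Nat.lt_of_le_of_lt (Nat.succ_le_of_lt hi'k) hki)
        exact ⟨fun hlt => hinc.2 hlt.le, fun hlt => hinc.1 hlt.le⟩
  exact hlA (hI.mem_of_isOrderAutonomousIn hA (mem_insert a _)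
    (mem_insert_of_mem a ⟨0, hk0, hf0⟩) hC.a_ne_b hlI)

theorem d_mem_of_indecomposable [WellFoundedLT β] (hC : IsIndecVCover l d a b h F)
    {I : Set β} (hI : IsIndecomposableSubset I) (haI : a ∈ I) (hbI : b ∈ I) (hlI : l ∈ I) :
    d ∈ I := by
  by_contra hdI
  have hA : IsOrderAutonomousIn I (I \ {l}) := by
    refine isOrderAutonomousIn_of_uniform sdiff_subset fun t ht => ?_
    obtain rfl : t = l := not_not.mp fun htl => ht.2 ⟨ht.1, htl⟩
    exact Or.inl fun x hx => hC.l_lt_of_ne_s12 hx.2 fun hxd => hdI (hxd ▸ hx.1)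
  exact (hI.mem_of_isOrderAutonomousIn hA ⟨haI, hC.l_lt_a_s12.ne'⟩
    ⟨hbI, (hC.l_lt_of_mem hC.b_mem).ne'⟩ hC.a_ne_b hlI).2 rfl

end IsIndecVCover

/-- If `C` is an indecomposable V-cover with distinguished elements
`a`, `b`, and `I ⊆ C` is indecomposable with `{a, b} ⊊ I`, then `I = C`. -/
theorem vCover_minimal {β : Type*} [PartialOrder β] [Fintype β]
    {l d a b h : β} {F : Set β} (hC : IsIndecVCover l d a b h F)
    {I : Set β} (hI : IsIndecomposableSubset I) (hsub : ({a, b} : Set β) ⊂ I) :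
    I = Set.univ := by
  have haI : a ∈ I := hsub.1 (mem_insert a {b})
  have hbI : b ∈ I := hsub.1 (mem_insert_of_mem a rfl)
  have hlI := hC.l_mem_of_indecomposable hI hsub
  have hFI := hC.fence_subset_of_indecomposable hI haI hbI hlI
  have hdI := hC.d_mem_of_indecomposable hI haI hbI hlI
  refine eq_univ_of_forall fun x => ?_
  rcases hC.eq_or_eq_or_eq_or_mem_s12 x with rfl | rfl | rfl | hx
  exacts [hlI, hdI, haI, hFI hx]
end

section
/- Let (P, a, b) ∈ 𝒳. If I ⊆ P is indecomposable (with the induced order) and {a, b} ⊊ I, then I = P. -/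
/-! Every poset in `𝒳` has an integer ranking `g`, injective on `P`, with `x < y ↔ g x + 2 ≤ g y`,
in which `a` has the least and `b` the greatest rank: the `N` is ranked `a, u, v, b`, and each new
minimum (maximum) is ranked just below (above) the element it is incomparable to. If some `x ∈ P`
were missing from `I`, its rank would lie strictly between those of `a` and `b`, and the elements
of `I` ranked below `x` would all lie strictly below those ranked above `x`. Both parts of this
series decomposition of `I` are order-autonomous, hence singletons, so `I = {a, b}`. -/

/-- `g` ranks `P` so that `x < y` exactly when the rank jumps by at least two; equivalently,
the incomparability graph of `P` is the path through `P` in increasing rank. -/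
def IsGapRanking {α : Type*} [PartialOrder α] (P : Set α) (g : α → ℤ) : Prop :=
  Set.InjOn g P ∧ ∀ x ∈ P, ∀ y ∈ P, x < y ↔ g x + 2 ≤ g y

section Autonomy

variable {α : Type*} [PartialOrder α] {S A L U : Set α}

lemma isOrderAutonomousIn_of_forall_lt_or_forall_gt (hA : A ⊆ S)
    (h : ∀ t ∈ S \ A, (∀ x ∈ A, t < x) ∨ (∀ x ∈ A, x < t)) : IsOrderAutonomousIn S A := by
  refine ⟨hA, fun t ht a₁ ha₁ a₂ ha₂ => ?_⟩
  rcases h t ht with hlt | hgt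
  · exact ⟨iff_of_true (hlt a₁ ha₁) (hlt a₂ ha₂),
      iff_of_false (hlt a₁ ha₁).not_gt (hlt a₂ ha₂).not_gt⟩
  · exact ⟨iff_of_false (hgt a₁ ha₁).not_gt (hgt a₂ ha₂).not_gt,
      iff_of_true (hgt a₁ ha₁) (hgt a₂ ha₂)⟩

lemma IsIndecomposableSubset.subsingleton_of_series (hS : IsIndecomposableSubset S)
    (hLU : L ∪ U = S) (hlt : ∀ l ∈ L, ∀ u ∈ U, l < u) (hL : L.Nonempty) (hU : U.Nonempty) :
    L.Subsingleton ∧ U.Subsingleton := by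
  have hU_of_notMem_L : ∀ t ∈ S \ L, t ∈ U := fun t ⟨htS, htL⟩ => by
    rw [← hLU] at htS
    exact htS.resolve_left htL
  have hL_of_notMem_U : ∀ t ∈ S \ U, t ∈ L := fun t ⟨htS, htU⟩ => by
    rw [← hLU] at htS
    exact htS.resolve_right htU
  obtain ⟨l, hl⟩ := hL
  obtain ⟨u, hu⟩ := hU
  have hL_aut : IsOrderAutonomousIn S L :=
    isOrderAutonomousIn_of_forall_lt_or_forall_gt (hLU ▸ Set.subset_union_left)
      fun t ht => Or.inr fun x hx => hlt x hx t (hU_of_notMem_L t ht)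
  have hU_aut : IsOrderAutonomousIn S U :=
    isOrderAutonomousIn_of_forall_lt_or_forall_gt (hLU ▸ Set.subset_union_right)
      fun t ht => Or.inl fun x hx => hlt t (hL_of_notMem_U t ht) x hx
  refine ⟨(hS L hL_aut).resolve_right fun hLS => ?_, (hS U hU_aut).resolve_right fun hUS => ?_⟩
  · have huL : u ∈ L := hLS ▸ hLU ▸ Or.inr hu
    exact (hlt u huL u hu).false
  · have hlU : l ∈ U := hUS ▸ hLU ▸ Or.inl hl
    exact (hlt l hl l hlU).false

end Autonomy

namespace IsGapRanking

variable {α : Type*} [PartialOrder α] {P : Set α} {g g' : α → ℤ}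

lemma congr (hg : IsGapRanking P g) (h : Set.EqOn g g' P) : IsGapRanking P g' :=
  ⟨hg.1.congr h, fun x hx y hy => h hx ▸ h hy ▸ hg.2 x hx y hy⟩

lemma insert_iff {a : α} (ha : a ∉ P) :
    IsGapRanking (insert a P) g ↔ IsGapRanking P g ∧
      ∀ p ∈ P, g p ≠ g a ∧ (a < p ↔ g a + 2 ≤ g p) ∧ (p < a ↔ g p + 2 ≤ g a) := by
  constructor
  · rintro ⟨hinj, hlt⟩
    refine ⟨⟨hinj.mono (Set.subset_insert a P), fun x hx y hy => hlt x (.inr hx) y (.inr hy)⟩,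
      fun p hp => ⟨fun h => ?_, hlt a (.inl rfl) p (.inr hp), hlt p (.inr hp) a (.inl rfl)⟩⟩
    exact ha (hinj (.inr hp) (.inl rfl) h ▸ hp)
  · rintro ⟨⟨hinj, hlt⟩, hnew⟩
    refine ⟨(Set.injOn_insert ha).2 ⟨hinj, fun ⟨p, hp, h⟩ => (hnew p hp).1 h⟩, ?_⟩
    rintro x (rfl | hx) y (rfl | hy)
    · exact iff_of_false (lt_irrefl _) (by omega)
    · exact (hnew y hy).2.1
    · exact (hnew x hx).2.2
    · exact hlt x hx y hy

lemma insert_bot [DecidableEq α] (hg : IsGapRanking P g) {a' a : α} (ha' : a' ∈ P)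
    (hmin : ∀ x ∈ P, g a' ≤ g x) (ha : a ∉ P)
    (hlt : ∀ p ∈ P \ {a'}, a < p) (hinc : ¬ a ≤ a' ∧ ¬ a' ≤ a) :
    IsGapRanking (insert a P) (Function.update g a (g a' - 1)) := by
  have hupd : Set.EqOn (Function.update g a (g a' - 1)) g P := fun x hx =>
    Function.update_of_ne (ne_of_mem_of_not_mem hx ha) _ _
  rw [insert_iff ha]
  refine ⟨hg.congr hupd.symm, fun p hp => ?_⟩
  rw [hupd hp, Function.update_self]
  rcases eq_or_ne p a' with rfl | hpa'
  · exact ⟨by omega, iff_of_false (fun h => hinc.1 h.le) (by omega),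
      iff_of_false (fun h => hinc.2 h.le) (by omega)⟩
  · have hne : g p ≠ g a' := fun h => hpa' (hg.1 hp ha' h)
    have hle := hmin p hp
    have hap := hlt p ⟨hp, hpa'⟩
    exact ⟨by omega, iff_of_true hap (by omega), iff_of_false hap.not_gt (by omega)⟩

lemma insert_top [DecidableEq α] (hg : IsGapRanking P g) {b' b : α} (hb' : b' ∈ P)
    (hmax : ∀ x ∈ P, g x ≤ g b') (hb : b ∉ P)
    (hgt : ∀ p ∈ P \ {b'}, p < b) (hinc : ¬ b ≤ b' ∧ ¬ b' ≤ b) :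
    IsGapRanking (insert b P) (Function.update g b (g b' + 1)) := by
  have hupd : Set.EqOn (Function.update g b (g b' + 1)) g P := fun x hx =>
    Function.update_of_ne (ne_of_mem_of_not_mem hx hb) _ _
  rw [insert_iff hb]
  refine ⟨hg.congr hupd.symm, fun p hp => ?_⟩
  rw [hupd hp, Function.update_self]
  rcases eq_or_ne p b' with rfl | hpb'
  · exact ⟨by omega, iff_of_false (fun h => hinc.1 h.le) (by omega),
      iff_of_false (fun h => hinc.2 h.le) (by omega)⟩
  · have hne : g p ≠ g b' := fun h => hpb' (hg.1 hp hb' h)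
    have hle := hmax p hp
    have hpb := hgt p ⟨hp, hpb'⟩
    exact ⟨by omega, iff_of_false hpb.not_gt (by omega), iff_of_true hpb (by omega)⟩

lemma mem_of_isIndecomposableSubset (hg : IsGapRanking P g) {I : Set α} (hIP : I ⊆ P)
    (hI : IsIndecomposableSubset I) {a b c x : α} (ha : a ∈ I) (hb : b ∈ I) (hc : c ∈ I)
    (hca : c ≠ a) (hcb : c ≠ b) (hx : x ∈ P) (hax : g a < g x) (hxb : g x < g b) : x ∈ I := by
  by_contra hxI
  set L := {y ∈ I | g y < g x}
  set U := {y ∈ I | g x < g y}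
  have hLU : L ∪ U = I := by
    refine (Set.union_subset (Set.sep_subset _ _) (Set.sep_subset _ _)).antisymm fun y hy => ?_
    have hyx : g y ≠ g x := fun h => hxI (hg.1 (hIP hy) hx h ▸ hy)
    rcases hyx.lt_or_gt with h | h
    · exact .inl ⟨hy, h⟩
    · exact .inr ⟨hy, h⟩
  have hlt : ∀ l ∈ L, ∀ u ∈ U, l < u := fun l ⟨hlI, hl⟩ u ⟨huI, hu⟩ =>
    (hg.2 l (hIP hlI) u (hIP huI)).2 (by omega)
  obtain ⟨hL, hU⟩ := hI.subsingleton_of_series hLU hlt ⟨a, ha, hax⟩ ⟨b, hb, hxb⟩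
  rcases hLU ▸ hc with hcL | hcU
  · exact hca (hL hcL ⟨ha, hax⟩)
  · exact hcb (hU hcU ⟨hb, hxb⟩)

end IsGapRanking

namespace InX

variable {α : Type*} [PartialOrder α] {P : Set α} {a b : α}

lemma left_mem (hP : InX P a b) : a ∈ P := by
  induction hP with
  | base => simp
  | addMin => exact Set.mem_insert _ _
  | addMax _ _ _ _ ih => exact Set.mem_insert_of_mem _ ih

lemma right_mem (hP : InX P a b) : b ∈ P := by
  induction hP with
  | base => simp
  | addMin _ _ _ _ ih => exact Set.mem_insert_of_mem _ ih
  | addMax => exact Set.mem_insert _ _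

lemma exists_isGapRanking (hP : InX P a b) :
    ∃ g : α → ℤ, IsGapRanking P g ∧ (∀ x ∈ P, g a ≤ g x) ∧ ∀ x ∈ P, g x ≤ g b := by
  classical
  induction hP with
  | @base u a b v hub hab hav hua huv hbv =>
    have hau : a ≠ u := fun h => hua.2 h.le
    have huv' : u ≠ v := fun h => huv.1 h.le
    have hvb : v ≠ b := fun h => hbv.2 h.le
    have nua : ¬ u < a := fun h => hua.1 h.le
    have nau : ¬ a < u := fun h => hua.2 h.le
    have nuv : ¬ u < v := fun h => huv.1 h.le
    have nvu : ¬ v < u := fun h => huv.2 h.le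
    have nbv : ¬ b < v := fun h => hbv.1 h.le
    have nvb : ¬ v < b := fun h => hbv.2 h.le
    -- ranks along the incomparability path `a - u - v - b`
    let g : α → ℤ := fun x => if x = a then 0 else if x = u then 1 else if x = v then 2 else 3
    refine ⟨g, ⟨?_, ?_⟩, ?_, ?_⟩
    all_goals
      simp [Set.InjOn, g, hau, hau.symm, huv', huv'.symm, hvb, hvb.symm, hab.ne, hab.ne', hav.ne,
        hav.ne', hub.ne, hub.ne', nua, nau, nuv, nvu, nbv, nvb, hub, hab, hav, hub.not_gt,
        hab.not_gt, hav.not_gt]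
  | @addMin P a' b a h ha hlt hinc ih =>
    obtain ⟨g, hg, hmin, hmax⟩ := ih
    have hupd : ∀ x ∈ P, Function.update g a (g a' - 1) x = g x := fun x hx =>
      Function.update_of_ne (ne_of_mem_of_not_mem hx ha) _ _
    refine ⟨_, hg.insert_bot h.left_mem hmin ha hlt hinc, ?_, ?_⟩
    · simp only [Set.forall_mem_insert, Function.update_self, le_refl, true_and]
      intro x hx
      linarith [hupd x hx, hmin x hx]
    · simp only [Set.forall_mem_insert, Function.update_self, hupd b h.right_mem]
      exact ⟨by linarith [hmax a' h.left_mem], fun x hx => hupd x hx ▸ hmax x hx⟩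
  | @addMax P a b' b h hb hgt hinc ih =>
    obtain ⟨g, hg, hmin, hmax⟩ := ih
    have hupd : ∀ x ∈ P, Function.update g b (g b' + 1) x = g x := fun x hx =>
      Function.update_of_ne (ne_of_mem_of_not_mem hx hb) _ _
    refine ⟨_, hg.insert_top h.right_mem hmax hb hgt hinc, ?_, ?_⟩
    · simp only [Set.forall_mem_insert, Function.update_self, hupd a h.left_mem]
      exact ⟨by linarith [hmin b' h.right_mem], fun x hx => hupd x hx ▸ hmin x hx⟩
    · simp only [Set.forall_mem_insert, Function.update_self, le_refl, true_and]
      intro x hx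
      linarith [hupd x hx, hmax x hx]

end InX

/-- If `(P, a, b) ∈ 𝒳` and `I ⊆ P` is indecomposable with
`{a, b} ⊊ I`, then `I = P`. -/
theorem inX_minimal {α : Type*} [PartialOrder α] {P : Set α} {a b : α}
    (hP : InX P a b) {I : Set α} (hIP : I ⊆ P) (hI : IsIndecomposableSubset I)
    (hsub : ({a, b} : Set α) ⊂ I) :
    I = P := by
  obtain ⟨g, hg, hmin, hmax⟩ := hP.exists_isGapRanking
  have haI : a ∈ I := hsub.1 (Set.mem_insert a {b})
  have hbI : b ∈ I := hsub.1 (Set.mem_insert_of_mem a rfl)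
  obtain ⟨c, hcI, hcab⟩ := Set.not_subset.1 hsub.2
  refine Set.Subset.antisymm hIP fun x hx => ?_
  rcases eq_or_ne x a with rfl | hxa
  · exact haI
  rcases eq_or_ne x b with rfl | hxb
  · exact hbI
  have hne : ∀ y ∈ P, y ≠ x → g y ≠ g x := fun y hy hyx h => hyx (hg.1 hy hx h)
  refine hg.mem_of_isIndecomposableSubset hIP hI haI hbI hcI (fun h => hcab (.inl h))
    (fun h => hcab (.inr h)) hx ?_ ?_
  · exact lt_of_le_of_ne (hmin x hx) (hne a hP.left_mem hxa.symm)
  · exact lt_of_le_of_ne (hmax x hx) (hne b hP.right_mem hxb.symm).symm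
end

section
/- Let T be a finite indecomposable partially ordered set with |T| > 2, let a < b in T, let R = {t ∈ T : a < t < b}, and suppose the induced subposet T \ R decomposes as L ⊕ U with L, U nonempty (every element of L strictly below every element of U). Then a ∈ L and a is maximal in L, b ∈ U and b is minimal in U, R ≠ ∅, and both of the following sets are nonempty: {r ∈ R : r is not above every element of L} and {r ∈ R : r is not below every element of U}. -/
/-!
A set `A` whose complement is nonempty and lies entirely below `A` is order-autonomous, so in an
indecomposable poset it has at most one element. Apply this to `A = Lᶜ = U ∪ R`: if `a` were
in `U`, or if every `r ∈ R` were above all of `L`, then `L` would lie below `U ∪ R`, which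
contains two distinct elements (`a, b`, respectively `b` and some `r ∈ R`). If `R` were empty,
both `Lᶜ = U` and (dually) `Uᶜ = L` would be subsingletons, so `|T| ≤ 2`. Every statement about
`L` and `a` has a counterpart about `U` and `b`, obtained in the order dual.
-/

open Set OrderDual

namespace IsIndecomposablePoset

variable {α : Type*} [PartialOrder α]

theorem dual (hT : IsIndecomposablePoset α) : IsIndecomposablePoset αᵒᵈ :=
  fun A hA => hT A ⟨subset_univ A, fun t ht a₁ h₁ a₂ h₂ => (hA.2 t ht a₁ h₁ a₂ h₂).symm⟩

theorem subsingleton_of_compl_lt (hT : IsIndecomposablePoset α) {A : Set α}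
    (hA : Aᶜ.Nonempty) (h : ∀ t ∉ A, ∀ x ∈ A, t < x) : A.Subsingleton := by
  refine (hT A ⟨subset_univ A, fun t ht a₁ h₁ a₂ h₂ => ?_⟩).resolve_right ?_
  · have h₁ := h t ht.2 a₁ h₁
    have h₂ := h t ht.2 a₂ h₂
    exact ⟨iff_of_true h₁ h₂, iff_of_false h₁.asymm h₂.asymm⟩
  · rintro rfl
    simp at hA

variable {a b : α} {L U : Set α}

theorem subsingleton_compl_of_forall_lt_Ioo (hT : IsIndecomposablePoset α) (hL : L.Nonempty)
    (hLU : L ∪ U = (Ioo a b)ᶜ) (hlt : ∀ l ∈ L, ∀ u ∈ U, l < u)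
    (hR : ∀ l ∈ L, ∀ r ∈ Ioo a b, l < r) : Lᶜ.Subsingleton := by
  refine hT.subsingleton_of_compl_lt (by rwa [compl_compl]) fun t ht x hx => ?_
  rw [notMem_compl_iff] at ht
  by_cases hxR : x ∈ Ioo a b
  · exact hR t ht x hxR
  · exact hlt t ht x ((hLU.symm.subset hxR).resolve_left hx)

theorem mem_of_union_eq_compl_Ioo (hT : IsIndecomposablePoset α) (hab : a < b)
    (hL : L.Nonempty) (hLU : L ∪ U = (Ioo a b)ᶜ) (hlt : ∀ l ∈ L, ∀ u ∈ U, l < u) : a ∈ L := by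
  by_contra haL
  have haU : a ∈ U := (hLU.symm.subset left_notMem_Ioo).resolve_left haL
  have hbL : b ∉ L := fun hbL => hab.asymm (hlt b hbL a haU)
  have hsub := hT.subsingleton_compl_of_forall_lt_Ioo hL hLU hlt
    fun l hl r hr => (hlt l hl a haU).trans hr.1
  exact hab.ne (hsub haL hbL)

theorem exists_mem_Ioo_not_forall_lt (hT : IsIndecomposablePoset α) (hL : L.Nonempty)
    (hLU : L ∪ U = (Ioo a b)ᶜ) (hlt : ∀ l ∈ L, ∀ u ∈ U, l < u) (hbU : b ∈ U)
    (hR : (Ioo a b).Nonempty) : ∃ r ∈ Ioo a b, ¬ ∀ l ∈ L, l < r := by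
  by_contra! h
  obtain ⟨r, hr⟩ := hR
  have hbL : b ∉ L := fun hbL => (hlt b hbL b hbU).false
  have hrL : r ∉ L := fun hrL => hLU.subset (.inl hrL) hr
  have hsub := hT.subsingleton_compl_of_forall_lt_Ioo hL hLU hlt fun l hl r hr => h r hr l hl
  exact hr.2.ne (hsub hrL hbL)

end IsIndecomposablePoset

theorem not_lt_of_union_eq_compl_Ioo {α : Type*} [Preorder α] {a b : α} {L U : Set α}
    (hLU : L ∪ U = (Ioo a b)ᶜ) (hlt : ∀ l ∈ L, ∀ u ∈ U, l < u) (hbU : b ∈ U) :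
    ∀ x ∈ L, ¬ a < x :=
  fun x hx hax => hLU.subset (.inl hx) ⟨hax, hlt x hx b hbU⟩

theorem card_le_two_of_subsingleton_compl {α : Type*} [Preorder α] [Fintype α]
    {L U : Set α} (hlt : ∀ l ∈ L, ∀ u ∈ U, l < u) (hL : Lᶜ.Subsingleton)
    (hU : Uᶜ.Subsingleton) : Fintype.card α ≤ 2 := by
  have hcover : Lᶜ ∪ Uᶜ = univ := by
    rw [← compl_inter, compl_univ_iff, eq_empty_iff_forall_notMem]
    exact fun x hx => (hlt x hx.1 x hx.2).false
  calc Fintype.card α = (Lᶜ ∪ Uᶜ).ncard := by rw [hcover, ncard_univ, Nat.card_eq_fintype_card]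
    _ ≤ Lᶜ.ncard + Uᶜ.ncard := ncard_union_le _ _
    _ ≤ 1 + 1 := add_le_add (ncard_le_one_iff_subsingleton.mpr hL)
        (ncard_le_one_iff_subsingleton.mpr hU)

theorem series_decomposition_facts_general {α : Type*} [PartialOrder α] [Fintype α]
    (hT : IsIndecomposablePoset α) (hcard : 2 < Fintype.card α)
    {a b : α} (hab : a < b)
    {L U : Set α} (hL : L.Nonempty) (hU : U.Nonempty)
    (hLU : L ∪ U = Set.univ \ {t : α | a < t ∧ t < b})
    (hlt : ∀ l ∈ L, ∀ u ∈ U, l < u) :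
    a ∈ L ∧ (∀ x ∈ L, ¬ a < x) ∧ b ∈ U ∧ (∀ x ∈ U, ¬ x < b) ∧
    {t : α | a < t ∧ t < b}.Nonempty ∧
    {r : α | (a < r ∧ r < b) ∧ ¬ ∀ l ∈ L, l < r}.Nonempty ∧
    {r : α | (a < r ∧ r < b) ∧ ¬ ∀ u ∈ U, r < u}.Nonempty := by
  replace hLU : L ∪ U = (Ioo a b)ᶜ := hLU.trans (compl_eq_univ_sdiff _).symm
  have hLU' : ofDual ⁻¹' U ∪ ofDual ⁻¹' L = (Ioo (toDual b) (toDual a))ᶜ := by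
    rw [Ioo_toDual, ← preimage_union, union_comm, hLU, preimage_compl]
  have hlt' : ∀ u ∈ ofDual ⁻¹' U, ∀ l ∈ ofDual ⁻¹' L, u < l := fun u hu l hl => hlt l hl u hu
  have haL := hT.mem_of_union_eq_compl_Ioo hab hL hLU hlt
  have hbU := hT.dual.mem_of_union_eq_compl_Ioo hab hU hLU' hlt'
  have hR : (Ioo a b).Nonempty := by
    by_contra! hR
    have := card_le_two_of_subsingleton_compl hlt
      (hT.subsingleton_compl_of_forall_lt_Ioo hL hLU hlt (by simp [hR]))
      (hT.dual.subsingleton_compl_of_forall_lt_Ioo hU hLU' hlt' (by simp [Ioo_toDual, hR]))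
    omega
  obtain ⟨r, ⟨hbr, hra⟩, hr⟩ := hT.dual.exists_mem_Ioo_not_forall_lt hU hLU' hlt' haL
    (by rw [Ioo_toDual]; exact hR)
  exact ⟨haL, not_lt_of_union_eq_compl_Ioo hLU hlt hbU, hbU,
    not_lt_of_union_eq_compl_Ioo hLU' hlt' haL, hR,
    hT.exists_mem_Ioo_not_forall_lt hL hLU hlt hbU hR, r, ⟨hra, hbr⟩, hr⟩

/-- If `T` is finite indecomposable, `|T| > 2`, `a < b`,
`R = {t : a < t < b}`, and `T \ R = L ⊕ U`, then `a` is maximal in `L`, `b` is minimal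
in `U`, `R ≠ ∅`, and both the set of `r ∈ R` not above all of `L` and the set of
`r ∈ R` not below all of `U` are nonempty. -/
theorem series_decomposition_facts {α : Type*} [PartialOrder α] [Fintype α]
    (hT : IsIndecomposablePoset α) (hcard : 2 < Fintype.card α)
    {a b : α} (hab : a < b)
    {L U : Set α} (hL : L.Nonempty) (hU : U.Nonempty)
    (hLU : L ∪ U = Set.univ \ {t : α | a < t ∧ t < b})
    (hdisj : Disjoint L U) (hlt : ∀ l ∈ L, ∀ u ∈ U, l < u) :
    a ∈ L ∧ (∀ x ∈ L, ¬ a < x) ∧ b ∈ U ∧ (∀ x ∈ U, ¬ x < b) ∧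
    {t : α | a < t ∧ t < b}.Nonempty ∧
    {r : α | (a < r ∧ r < b) ∧ ¬ ∀ l ∈ L, l < r}.Nonempty ∧
    {r : α | (a < r ∧ r < b) ∧ ¬ ∀ u ∈ U, r < u}.Nonempty :=
  series_decomposition_facts_general hT hcard hab hL hU hLU hlt
end

section
/- Let T be a finite indecomposable partially ordered set with |T| > 2, let a < b in T, let R = {t ∈ T : a < t < b}, and suppose the induced subposet T \ R decomposes as L ⊕ U with L, U nonempty, a ∈ L maximal in L and b ∈ U minimal in U. If there is an r ∈ R that is not above every element of L and not below every element of U, then there exist a' ∈ L maximal in L and b' ∈ U minimal in U such that a' is incomparable to r and b' is incomparable to r; consequently the five pairwise distinct elements a, a', r, b', b induce a subposet whose only strict comparabilities are a < r, r < b, a < b, a < b', a' < b' and a' < b. -/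
/-!
Lift some `l ∈ L` that is not below `r` to a maximal element `a'` of `L`; then `a'` is not
below `r` either. It is not equal to `r` since `r ∉ L`, and not above `r` since
`a < r ≤ a'` would contradict the maximality of `a`. Being incomparable to `r`, it is also
incomparable to `a < r`, again by maximality of `a`. Dually for `b'`; all remaining
comparabilities come from `L < U` and `a < r < b`.
-/

section

variable {α : Type*} [PartialOrder α]

lemma exists_maximal_incomparable {L : Set α} (hfin : L.Finite) {a r : α}
    (hamax : ∀ x ∈ L, ¬ a < x) (har : a < r) (hrL : r ∉ L) (hLr : ¬ ∀ l ∈ L, l < r) :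
    ∃ a' ∈ L, (∀ x ∈ L, ¬ a' < x) ∧ (¬ a' ≤ r ∧ ¬ r ≤ a') ∧ (¬ a ≤ a' ∧ ¬ a' ≤ a) := by
  push Not at hLr
  obtain ⟨l, hlL, hlr⟩ := hLr
  obtain ⟨a', hla', ha'max⟩ := hfin.exists_le_maximal hlL
  have ha'L := ha'max.prop
  have ha'r : ¬ a' ≤ r := fun h =>
    h.lt_or_eq.elim (fun h => hlr (hla'.trans_lt h)) fun e => hrL (e ▸ ha'L)
  have hra' : ¬ r ≤ a' := fun h => hamax a' ha'L (har.trans_le h)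
  have haa' : ¬ a ≤ a' := fun h => ha'r (h.eq_of_not_lt (hamax a' ha'L) ▸ har.le)
  exact ⟨a', ha'L, fun x hx => ha'max.not_gt hx, ⟨ha'r, hra'⟩,
    ⟨haa', fun h => ha'r (h.trans har.le)⟩⟩

lemma exists_minimal_incomparable {U : Set α} (hfin : U.Finite) {b r : α}
    (hbmin : ∀ x ∈ U, ¬ x < b) (hrb : r < b) (hrU : r ∉ U) (hUr : ¬ ∀ u ∈ U, r < u) :
    ∃ b' ∈ U, (∀ x ∈ U, ¬ x < b') ∧ (¬ b' ≤ r ∧ ¬ r ≤ b') ∧ (¬ b ≤ b' ∧ ¬ b' ≤ b) := by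
  obtain ⟨b', hb'U, hb'min, ⟨hrb', hb'r⟩, ⟨hb'b, hbb'⟩⟩ :=
    exists_maximal_incomparable (α := αᵒᵈ) hfin hbmin hrb hrU hUr
  exact ⟨b', hb'U, hb'min, ⟨hb'r, hrb'⟩, ⟨hbb', hb'b⟩⟩

end

theorem x_configuration_general {α : Type*} [PartialOrder α] [Fintype α]
    {a b : α}
    {L U : Set α}
    (hLU : L ∪ U = Set.univ \ {t : α | a < t ∧ t < b})
    (hlt : ∀ l ∈ L, ∀ u ∈ U, l < u)
    (haL : a ∈ L) (hamax : ∀ x ∈ L, ¬ a < x)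
    (hbU : b ∈ U) (hbmin : ∀ x ∈ U, ¬ x < b)
    {r : α} (hr : a < r ∧ r < b)
    (hra : ¬ ∀ l ∈ L, l < r) (hrb : ¬ ∀ u ∈ U, r < u) :
    ∃ a' ∈ L, ∃ b' ∈ U, (∀ x ∈ L, ¬ a' < x) ∧ (∀ x ∈ U, ¬ x < b') ∧
      [a, a', r, b', b].Pairwise (· ≠ ·) ∧
      a < r ∧ r < b ∧ a < b ∧ a < b' ∧ a' < b' ∧ a' < b ∧
      (¬ a' ≤ r ∧ ¬ r ≤ a') ∧ (¬ b' ≤ r ∧ ¬ r ≤ b') ∧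
      (¬ a ≤ a' ∧ ¬ a' ≤ a) ∧ (¬ b ≤ b' ∧ ¬ b' ≤ b) := by
  have hrLU : r ∉ L ∪ U := by simp [hLU, hr.1, hr.2]
  obtain ⟨a', ha'L, ha'max, ha'r, haa'⟩ :=
    exists_maximal_incomparable L.toFinite hamax hr.1 (fun h => hrLU (.inl h)) hra
  obtain ⟨b', hb'U, hb'min, hb'r, hbb'⟩ :=
    exists_minimal_incomparable U.toFinite hbmin hr.2 (fun h => hrLU (.inr h)) hrb
  have hab' : a < b' := hlt a haL b' hb'U
  have ha'b' : a' < b' := hlt a' ha'L b' hb'U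
  have ha'b : a' < b := hlt a' ha'L b hbU
  refine ⟨a', ha'L, b', hb'U, ha'max, hb'min, ?_, hr.1, hr.2, hr.1.trans hr.2, hab', ha'b', ha'b,
    ha'r, hb'r, haa', hbb'⟩
  simp only [List.pairwise_cons, List.mem_cons, List.not_mem_nil, or_false, forall_eq_or_imp,
    forall_eq, IsEmpty.forall_iff, implies_true, List.Pairwise.nil, and_true]
  exact ⟨⟨fun h => haa'.1 h.le, hr.1.ne, hab'.ne, (hr.1.trans hr.2).ne⟩,
    ⟨fun h => ha'r.1 h.le, ha'b'.ne, ha'b.ne⟩, ⟨fun h => hb'r.2 h.le, hr.2.ne⟩,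
    fun h => hbb'.2 h.le⟩

/-- With `T \ R = L ⊕ U` as in Statement 14, if some `r ∈ R` is
neither above all of `L` nor below all of `U`, then there are `a'` maximal in `L` and
`b'` minimal in `U`, each incomparable to `r`, such that `{a, a', r, b', b}` are
pairwise distinct and induce exactly the comparabilities
`a < r`, `r < b`, `a < b`, `a < b'`, `a' < b'`, `a' < b` (an `X` as in Figure 1). -/
theorem x_configuration {α : Type*} [PartialOrder α] [Fintype α]
    (hT : IsIndecomposablePoset α) (hcard : 2 < Fintype.card α)
    {a b : α} (hab : a < b)
    {L U : Set α} (hL : L.Nonempty) (hU : U.Nonempty)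
    (hLU : L ∪ U = Set.univ \ {t : α | a < t ∧ t < b})
    (hdisj : Disjoint L U) (hlt : ∀ l ∈ L, ∀ u ∈ U, l < u)
    (haL : a ∈ L) (hamax : ∀ x ∈ L, ¬ a < x)
    (hbU : b ∈ U) (hbmin : ∀ x ∈ U, ¬ x < b)
    {r : α} (hr : a < r ∧ r < b)
    (hra : ¬ ∀ l ∈ L, l < r) (hrb : ¬ ∀ u ∈ U, r < u) :
    ∃ a' ∈ L, ∃ b' ∈ U, (∀ x ∈ L, ¬ a' < x) ∧ (∀ x ∈ U, ¬ x < b') ∧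
      [a, a', r, b', b].Pairwise (· ≠ ·) ∧
      a < r ∧ r < b ∧ a < b ∧ a < b' ∧ a' < b' ∧ a' < b ∧
      (¬ a' ≤ r ∧ ¬ r ≤ a') ∧ (¬ b' ≤ r ∧ ¬ r ≤ b') ∧
      (¬ a ≤ a' ∧ ¬ a' ≤ a) ∧ (¬ b ≤ b' ∧ ¬ b' ≤ b) :=
  x_configuration_general hLU hlt haL hamax hbU hbmin hr hra hrb
end
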